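/- arXiv:2111.08100 — 7 statements merged into one kernel-verified Lean document; each statement's English description precedes it below -/
import Mathlib

section
/- For every pair of positive integers m and d there exists a special set system β_{m,d} = {B; C_1, ..., C_m} on m subsets whose universe B satisfies |B| ≤ K · 2^{2d} · m² for some absolute constant K > 0 independent of m and d. -/
/-!
The columns of a `d`-universal family of `N` Boolean vectors of length `m` (every pattern on at
most `d` coordinates occurs among them) form a special set system on `N` points. A random family
of `N = 2 ^ d * (2 * m + 1)` vectors is `d`-universal: each of the at most `4 ^ m` patterns is
missed with probability at most `(1 - 2⁻ᵈ) ^ N ≤ e ^ (-(2 * m + 1)) < 4⁻ᵐ`.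
-/

open Finset Real

section SetSystems

variable {ι β γ : Type*}

def IsSpecialSetSystem [DecidableEq β] (d : ℕ) (B : Finset β) (C : ι → Finset β) : Prop :=
  (∀ i, C i ⊆ B) ∧
    ∀ (I : Finset ι) (D : ι → Finset β),
      I.card ≤ d → (∀ i ∈ I, D i = C i ∨ D i = B \ C i) → I.biUnion D ≠ B

def IsUniversalFamily (d : ℕ) (x : γ → ι → Bool) : Prop :=
  ∀ (I : Finset ι) (τ : ι → Bool), I.card ≤ d → ∃ j, ∀ i ∈ I, x j i = τ i

/-- A point `j` realising the pattern "`j ∈ C i` iff `D i = B \ C i`" lies outside every `D i`. -/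
theorem IsUniversalFamily.isSpecialSetSystem_map [Fintype γ] [DecidableEq β] {d : ℕ}
    {x : γ → ι → Bool} (hx : IsUniversalFamily d x) (e : γ ↪ β) :
    IsSpecialSetSystem d (univ.map e) (fun i => (univ.filter (x · i)).map e) := by
  refine ⟨fun i => map_subset_map.mpr (filter_subset _ _), fun I D hI hD hcover => ?_⟩
  classical
  set C := fun i => (univ.filter (x · i)).map e
  obtain ⟨j, hj⟩ := hx I (fun i => decide (D i ≠ C i)) hI
  have hjD : ∀ i ∈ I, e j ∉ D i := by
    intro i hi
    by_cases hDC : D i = C i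
    · have hji : x j i = false := by simpa [hDC] using hj i hi
      simp [hDC, C, hji]
    · have hji : x j i = true := by simpa [hDC] using hj i hi
      simp [(hD i hi).resolve_left hDC, C, hji]
  obtain ⟨i, hi, hmem⟩ := mem_biUnion.mp (hcover ▸ mem_map_of_mem e (mem_univ j))
  exact hjD i hi hmem

end SetSystems

/-- The union bound: a uniformly random `N`-tuple misses `S c` with probability at most
`(1 - p) ^ N`. -/
theorem exists_tuple_forall_exists_mem {α κ : Type*} [Fintype α] [Nonempty α] [DecidableEq α]
    (s : Finset κ) (S : κ → Finset α) (p : ℝ) (N : ℕ)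
    (hS : ∀ c ∈ s, p * Fintype.card α ≤ (S c).card) (h : s.card * (1 - p) ^ N < 1) :
    ∃ w : Fin N → α, ∀ c ∈ s, ∃ j, w j ∈ S c := by
  set bad := s.biUnion fun c => Fintype.piFinset fun _ : Fin N => (S c)ᶜ
  have hcompl : ∀ c ∈ s, ((S c)ᶜ.card : ℝ) ^ N ≤ ((1 - p) * Fintype.card α) ^ N := by
    intro c hc
    gcongr
    rw [card_compl, Nat.cast_sub (card_le_univ _)]
    linarith [hS c hc]
  have hbad : bad.card < (univ : Finset (Fin N → α)).card := by
    have hpos : (0 : ℝ) < (Fintype.card α : ℝ) ^ N := by positivity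
    have : (bad.card : ℝ) < (Fintype.card α : ℝ) ^ N :=
      calc (bad.card : ℝ) ≤ ∑ c ∈ s, ((S c)ᶜ.card : ℝ) ^ N := by
            exact_mod_cast card_biUnion_le.trans_eq (by simp)
        _ ≤ ∑ _c ∈ s, ((1 - p) * Fintype.card α) ^ N := sum_le_sum hcompl
        _ = (s.card * (1 - p) ^ N) * (Fintype.card α : ℝ) ^ N := by
            rw [sum_const, nsmul_eq_mul, mul_pow, mul_assoc]
        _ < (Fintype.card α : ℝ) ^ N := by nlinarith
    simpa [Fintype.card_fun] using (by exact_mod_cast this : bad.card < Fintype.card α ^ N)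
  obtain ⟨w, -, hw⟩ := exists_mem_notMem_of_card_lt_card hbad
  refine ⟨w, fun c hc => ?_⟩
  have : w ∉ Fintype.piFinset fun _ : Fin N => (S c)ᶜ :=
    fun hw' => hw (mem_biUnion.mpr ⟨c, hc, hw'⟩)
  simpa [Fintype.mem_piFinset] using this

theorem four_pow_mul_exp_neg_lt_one (n : ℕ) : (4 : ℝ) ^ n * exp (-(2 * n + 1)) < 1 := by
  have h4 : (4 : ℝ) < exp 2 := by
    rw [show (2 : ℝ) = 1 + 1 by norm_num, Real.exp_add]
    nlinarith [Real.exp_one_gt_d9]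
  calc (4 : ℝ) ^ n * exp (-(2 * n + 1)) ≤ exp 2 ^ n * exp (-(2 * n + 1)) := by gcongr
    _ = exp (-1) := by rw [← Real.exp_nat_mul, ← Real.exp_add]; ring_nf
    _ < 1 := Real.exp_lt_one_iff.mpr (by norm_num)

theorem one_sub_inv_pow_mul_le_exp_neg {r : ℕ} (hr : 0 < r) (n : ℕ) :
    (1 - (r : ℝ)⁻¹) ^ (r * n) ≤ exp (-n) :=
  calc (1 - (r : ℝ)⁻¹) ^ (r * n) ≤ exp (-(r : ℝ)⁻¹) ^ (r * n) :=
        pow_le_pow_left₀ (sub_nonneg.2 (inv_le_one_of_one_le₀ (by exact_mod_cast hr)))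
          (one_sub_le_exp_neg _) _
    _ = exp (-n) := by
        rw [← Real.exp_nat_mul]
        congr 1
        push_cast
        field_simp

theorem cast_mul_one_sub_inv_two_pow_pow_lt_one (d : ℕ) {k n : ℕ} (hk : k ≤ 4 ^ n) :
    (k : ℝ) * (1 - (2 ^ d : ℝ)⁻¹) ^ (2 ^ d * (2 * n + 1)) < 1 := by
  have hq : (1 - (2 ^ d : ℝ)⁻¹) ^ (2 ^ d * (2 * n + 1)) ≤ exp (-(2 * n + 1)) := by
    simpa using one_sub_inv_pow_mul_le_exp_neg (Nat.two_pow_pos d) (2 * n + 1)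
  calc (k : ℝ) * (1 - (2 ^ d : ℝ)⁻¹) ^ (2 ^ d * (2 * n + 1))
      ≤ k * exp (-(2 * n + 1)) := by gcongr
    _ ≤ 4 ^ n * exp (-(2 * n + 1)) := by gcongr; exact_mod_cast hk
    _ < 1 := four_pow_mul_exp_neg_lt_one n

section BooleanCube

variable {ι : Type*} [Fintype ι] [DecidableEq ι]

theorem card_piFinset_agreeOn (I : Finset ι) (τ : ι → Bool) :
    (Fintype.piFinset fun i => if i ∈ I then {τ i} else univ).card = 2 ^ #Iᶜ := by
  simp [Fintype.card_piFinset, apply_ite Finset.card, prod_ite, filter_not, compl_eq_univ_sdiff]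

variable (ι) in
theorem exists_isUniversalFamily (d : ℕ) :
    ∃ x : Fin (2 ^ d * (2 * Fintype.card ι + 1)) → ι → Bool, IsUniversalFamily d x := by
  set s := (univ : Finset (Finset ι × (ι → Bool))).filter fun c => #c.1 ≤ d
  have hdensity : ∀ c ∈ s, (2 ^ d : ℝ)⁻¹ * Fintype.card (ι → Bool) ≤
      (Fintype.piFinset fun i => if i ∈ c.1 then {c.2 i} else univ).card := by
    rintro ⟨I, τ⟩ hc
    have hI : #I ≤ d := (mem_filter.mp hc).2
    have : 2 ^ Fintype.card ι ≤ 2 ^ d * 2 ^ #Iᶜ := by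
      rw [← card_add_card_compl I, pow_add]
      gcongr
      norm_num
    rw [card_piFinset_agreeOn, Fintype.card_fun, Fintype.card_bool,
      inv_mul_le_iff₀ (by positivity)]
    exact_mod_cast this
  have hcount : s.card * (1 - (2 ^ d : ℝ)⁻¹) ^ (2 ^ d * (2 * Fintype.card ι + 1)) < 1 :=
    cast_mul_one_sub_inv_two_pow_pow_lt_one d <| (card_filter_le _ _).trans
      (by simp [Fintype.card_finset, ← mul_pow])
  obtain ⟨x, hx⟩ := exists_tuple_forall_exists_mem s _ _ _ hdensity hcount
  refine ⟨x, fun I τ hI => ?_⟩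
  obtain ⟨j, hj⟩ := hx (I, τ) (by simpa [s])
  exact ⟨j, fun i hi => by simpa [hi] using Fintype.mem_piFinset.mp hj i⟩

end BooleanCube

/-- For every pair of positive integers `m` and `d` there exists a
special set system `β_{m,d} = {B; C_1, ..., C_m}` on `m` subsets whose universe `B`
satisfies `|B| ≤ K · 2^(2d) · m²` for some absolute constant `K > 0` independent of
`m` and `d`.  A special set system consists of a finite universe `B` together with
subsets `C i ⊆ B` such that no union of at most `d` sets, each of which is some
`C i` or its complement `B \ C i` (at most one per index), equals `B`. -/
theorem special_set_system_exists_quadratic :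
    ∃ K : ℝ, 0 < K ∧
      ∀ m d : ℕ, 0 < m → 0 < d →
        ∃ (B : Finset ℕ) (C : Fin m → Finset ℕ),
          (∀ i, C i ⊆ B) ∧
          (∀ (I : Finset (Fin m)) (D : Fin m → Finset ℕ),
            I.card ≤ d → (∀ i ∈ I, D i = C i ∨ D i = B \ C i) →
            I.biUnion D ≠ B) ∧
          (B.card : ℝ) ≤ K * 2 ^ (2 * d) * (m : ℝ) ^ 2 := by
  refine ⟨3, by norm_num, fun m d hm _ => ?_⟩
  obtain ⟨x, hx⟩ := exists_isUniversalFamily (Fin m) d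
  obtain ⟨hsub, hcover⟩ := hx.isSpecialSetSystem_map Fin.valEmbedding
  refine ⟨_, _, hsub, hcover, ?_⟩
  have hN : 2 ^ d * (2 * m + 1) ≤ 3 * 2 ^ (2 * d) * m ^ 2 :=
    calc 2 ^ d * (2 * m + 1) ≤ 2 ^ (2 * d) * (3 * m ^ 2) := by
          gcongr
          · norm_num
          · omega
          · nlinarith
      _ = 3 * 2 ^ (2 * d) * m ^ 2 := by ring
  simp only [card_map, card_univ, Fintype.card_fin]
  exact_mod_cast hN
end

section
/- For every pair of positive integers m and d with m ≥ 2 there exists a special set system β_{m,d} = {B; C_1, ..., C_m} on m subsets whose universe B satisfies |B| ≤ (d + d·ln m + 2) · 2^d. -/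
/-!
Take `n = ⌊(d + d ln m + 2) 2^d⌋` points and give each point `x` a vector `g x ∈ {0,1}^m`,
with `C_i = {x | g x i}`. Choosing `D_i ∈ {C_i, B \ C_i}` for `i ∈ I` is choosing a sign
pattern `ε` on `I`, and `⋃ D_i` misses exactly the points whose vector agrees with `ε` on `I`.
For uniformly random `g`, a pattern on `k ≤ d` coordinates is matched by no point with
probability `(1 - 2^{-k})^n ≤ e^{-n/2^d}`, while there are fewer than `2^{d+1} m^d` patterns
on at most `d` coordinates, which the choice of `n` makes smaller than `e^{n/2^d}`. By the
union bound (counted in `ℕ`) some `g` matches every such pattern.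
-/

open Finset Real

section Patterns

variable {α ι : Type*} [Fintype α] [Fintype ι] [DecidableEq ι]

def Matches (I : Finset ι) (ε : ∀ i ∈ I, Bool) (v : ι → Bool) : Prop :=
  ∀ i (hi : i ∈ I), v i = ε i hi

instance (I : Finset ι) (ε : ∀ i ∈ I, Bool) : DecidablePred (Matches I ε) :=
  fun _ => by unfold Matches; infer_instance

def MatchesAllPatterns (d : ℕ) (g : α → ι → Bool) : Prop :=
  ∀ I : Finset ι, #I ≤ d → ∀ ε : ∀ i ∈ I, Bool, ∃ x, Matches I ε (g x)

lemma card_matches (I : Finset ι) (ε : ∀ i ∈ I, Bool) :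
    #{v | Matches I ε v} = 2 ^ (Fintype.card ι - #I) := by
  have hpi : filter (Matches I ε) univ =
      Fintype.piFinset fun i => if hi : i ∈ I then {ε i hi} else univ := by
    ext v
    simp only [mem_filter, mem_univ, true_and, Fintype.mem_piFinset, Matches]
    refine forall_congr' fun i => ?_
    by_cases hi : i ∈ I <;> simp [hi]
  have hcard : ∀ i, #(if hi : i ∈ I then {ε i hi} else (univ : Finset Bool)) =
      if i ∈ Iᶜ then 2 else 1 := by
    intro i
    by_cases hi : i ∈ I <;> simp [hi]
  rw [hpi, Fintype.card_piFinset, prod_congr rfl fun i _ => hcard i, prod_ite_mem, univ_inter,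
    prod_const, card_compl]

lemma card_not_matches (I : Finset ι) (ε : ∀ i ∈ I, Bool) :
    #{v | ¬Matches I ε v} = 2 ^ Fintype.card ι - 2 ^ (Fintype.card ι - #I) := by
  rw [filter_not, card_sdiff_of_subset (filter_subset _ _), card_matches, card_univ,
    Fintype.card_fun, Fintype.card_bool]

lemma card_forall_not_matches [DecidableEq α] (I : Finset ι) (ε : ∀ i ∈ I, Bool) :
    #{g : α → ι → Bool | ∀ x, ¬Matches I ε (g x)} =
      (2 ^ Fintype.card ι - 2 ^ (Fintype.card ι - #I)) ^ Fintype.card α := by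
  have hpi : filter (fun g : α → ι → Bool => ∀ x, ¬Matches I ε (g x)) univ =
      Fintype.piFinset fun _ => {v | ¬Matches I ε v} := by
    ext g; simp
  rw [hpi, Fintype.card_piFinset, prod_const, card_not_matches, card_univ]

lemma exists_matchesAllPatterns [DecidableEq α] (d : ℕ)
    (h : (∑ k ∈ range (d + 1), (Fintype.card ι).choose k * 2 ^ k) *
        (2 ^ Fintype.card ι - 2 ^ (Fintype.card ι - d)) ^ Fintype.card α <
      (2 ^ Fintype.card ι) ^ Fintype.card α) :
    ∃ g : α → ι → Bool, MatchesAllPatterns d g := by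
  set q := 2 ^ Fintype.card ι - 2 ^ (Fintype.card ι - d)
  let bad (I : Finset ι) (ε : ∀ i ∈ I, Bool) : Finset (α → ι → Bool) :=
    {g | ∀ x, ¬Matches I ε (g x)}
  let U := (range (d + 1)).biUnion fun k => (powersetCard k univ).biUnion fun I =>
    (I.pi fun _ => univ).biUnion (bad I)
  have hbad : ∀ I : Finset ι, #I ≤ d → ∀ ε, #(bad I ε) ≤ q ^ Fintype.card α := by
    intro I hI ε
    rw [card_forall_not_matches]
    exact Nat.pow_le_pow_left (Nat.sub_le_sub_left
      (Nat.pow_le_pow_right two_pos (Nat.sub_le_sub_left hI _)) _) _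
  have hU : #U < #(univ : Finset (α → ι → Bool)) := by
    calc #U ≤ ∑ k ∈ range (d + 1), ∑ I ∈ powersetCard k univ,
            ∑ ε ∈ I.pi fun _ => univ, #(bad I ε) :=
          card_biUnion_le.trans <| sum_le_sum fun k _ => card_biUnion_le.trans <|
            sum_le_sum fun I _ => card_biUnion_le
      _ ≤ ∑ k ∈ range (d + 1), ∑ I ∈ powersetCard k (univ : Finset ι),
            ∑ _ε ∈ I.pi fun _ => (univ : Finset Bool), q ^ Fintype.card α := by
          gcongr with k hk I hI
          exact hbad I ((mem_powersetCard_univ.1 hI).trans_le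
            (by simpa [Nat.lt_succ_iff] using hk)) _
      _ = (∑ k ∈ range (d + 1), (Fintype.card ι).choose k * 2 ^ k) * q ^ Fintype.card α := by
          rw [sum_mul]
          refine sum_congr rfl fun k _ => ?_
          rw [sum_congr rfl fun I hI => by rw [sum_const, card_pi, prod_const, card_univ,
            Fintype.card_bool, mem_powersetCard_univ.1 hI], sum_const, card_powersetCard, card_univ,
            smul_eq_mul, smul_eq_mul, mul_assoc]
      _ < _ := by simpa [Fintype.card_fun] using h
  obtain ⟨g, -, hg⟩ := exists_mem_notMem_of_card_lt_card hU
  refine ⟨g, fun I hI ε => ?_⟩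
  by_contra! hno
  exact hg (mem_biUnion.2 ⟨#I, mem_range.2 (by omega), mem_biUnion.2 ⟨I,
    mem_powersetCard_univ.2 rfl, mem_biUnion.2 ⟨ε, by simp, by simpa [bad] using hno⟩⟩⟩)

end Patterns

lemma sum_choose_mul_two_pow_lt {m : ℕ} (hm : 1 ≤ m) (d : ℕ) :
    ∑ k ∈ range (d + 1), m.choose k * 2 ^ k < 2 ^ (d + 1) * m ^ d := by
  have hmd : 0 < m ^ d := pow_pos hm d
  calc ∑ k ∈ range (d + 1), m.choose k * 2 ^ k ≤ ∑ k ∈ range (d + 1), m ^ d * 2 ^ k :=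
        sum_le_sum fun k hk => Nat.mul_le_mul_right _ <| (Nat.choose_le_pow m k).trans <|
          Nat.pow_le_pow_right hm (Nat.lt_succ_iff.1 (mem_range.1 hk))
    _ = m ^ d * (2 ^ (d + 1) - 1) := by rw [← mul_sum, Nat.geomSum_eq le_rfl]; simp
    _ < 2 ^ (d + 1) * m ^ d := by
        rw [Nat.mul_sub, mul_one, mul_comm]
        exact Nat.sub_lt (Nat.mul_pos (Nat.two_pow_pos _) hmd) hmd

lemma cast_two_pow_sub_two_pow_sub_le (m d : ℕ) :
    ((2 ^ m - 2 ^ (m - d) : ℕ) : ℝ) ≤ 2 ^ m * (1 - (2 ^ d)⁻¹) := by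
  rw [Nat.cast_sub (Nat.pow_le_pow_right two_pos (Nat.sub_le m d))]
  have h : (2 : ℝ) ^ m ≤ 2 ^ (m - d) * 2 ^ d := by
    rw [← pow_add]; exact pow_le_pow_right₀ one_le_two (by omega)
  have h' : (2 : ℝ) ^ m * (2 ^ d)⁻¹ ≤ 2 ^ (m - d) := by
    rw [← div_eq_mul_inv, div_le_iff₀ (by positivity)]; exact h
  push_cast
  linarith

lemma cast_two_pow_sub_two_pow_sub_pow_le (m d n : ℕ) :
    ((2 ^ m - 2 ^ (m - d) : ℕ) : ℝ) ^ n ≤ (2 ^ m) ^ n * exp (-(n / 2 ^ d)) := by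
  have hinv : (2 ^ d : ℝ)⁻¹ ≤ 1 := inv_le_one_of_one_le₀ (one_le_pow₀ one_le_two)
  calc ((2 ^ m - 2 ^ (m - d) : ℕ) : ℝ) ^ n ≤ (2 ^ m * (1 - (2 ^ d)⁻¹)) ^ n :=
        pow_le_pow_left₀ (Nat.cast_nonneg _) (cast_two_pow_sub_two_pow_sub_le m d) n
    _ = (2 ^ m) ^ n * (1 - (2 ^ d)⁻¹) ^ n := mul_pow _ _ _
    _ ≤ (2 ^ m) ^ n * exp (-(2 ^ d)⁻¹) ^ n := by
        gcongr (2 ^ m) ^ n * ?_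
        exact pow_le_pow_left₀ (by linarith) (one_sub_le_exp_neg _) n
    _ = (2 ^ m) ^ n * exp (-(n / 2 ^ d)) := by rw [← exp_nat_mul]; ring_nf

lemma two_pow_succ_mul_pow_le_exp {m d n : ℕ} (hm : 1 ≤ m) (hd : 1 ≤ d)
    (hn : ((d : ℝ) + d * log m + 2) * 2 ^ d - 1 ≤ n) :
    (2 : ℝ) ^ (d + 1) * m ^ d ≤ exp (n / 2 ^ d) := by
  have hm0 : (0 : ℝ) < m := by exact_mod_cast hm
  have h2d : (2 : ℝ) ≤ 2 ^ d := by simpa using pow_le_pow_right₀ one_le_two hd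
  have hexp : (d : ℝ) + d * log m + 3 / 2 ≤ n / 2 ^ d := by
    rw [le_div_iff₀ (by positivity)]; nlinarith
  have h2e : (2 : ℝ) ≤ exp 1 := by linarith [add_one_le_exp (1 : ℝ)]
  have h2e' : (2 : ℝ) ≤ exp (3 / 2) := by linarith [add_one_le_exp (3 / 2 : ℝ)]
  calc (2 : ℝ) ^ (d + 1) * m ^ d = 2 * 2 ^ d * m ^ d := by ring
    _ ≤ exp (3 / 2) * exp 1 ^ d * exp (log m) ^ d := by rw [exp_log hm0]; gcongr
    _ = exp (d + d * log m + 3 / 2) := by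
        rw [← exp_nat_mul, ← exp_nat_mul, ← exp_add, ← exp_add]; ring_nf
    _ ≤ exp (n / 2 ^ d) := exp_le_exp.2 hexp

lemma sum_choose_mul_two_pow_mul_lt {m d n : ℕ} (hm : 1 ≤ m) (hd : 1 ≤ d)
    (hn : ((d : ℝ) + d * log m + 2) * 2 ^ d - 1 ≤ n) :
    (∑ k ∈ range (d + 1), m.choose k * 2 ^ k) * (2 ^ m - 2 ^ (m - d)) ^ n < (2 ^ m) ^ n := by
  have hsum : ((∑ k ∈ range (d + 1), m.choose k * 2 ^ k : ℕ) : ℝ) < exp (n / 2 ^ d) :=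
    (Nat.cast_lt.2 (sum_choose_mul_two_pow_lt hm d)).trans_le <| by
      simpa using two_pow_succ_mul_pow_le_exp hm hd hn
  rw [← Nat.cast_lt (α := ℝ), Nat.cast_mul, Nat.cast_pow, Nat.cast_pow, Nat.cast_pow,
    Nat.cast_ofNat]
  calc _ ≤ ((∑ k ∈ range (d + 1), m.choose k * 2 ^ k : ℕ) : ℝ) *
        ((2 ^ m) ^ n * exp (-(n / 2 ^ d))) := by
        gcongr; exact cast_two_pow_sub_two_pow_sub_pow_le m d n
    _ < exp (n / 2 ^ d) * ((2 ^ m) ^ n * exp (-(n / 2 ^ d))) := by gcongr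
    _ = (2 ^ m) ^ n := by rw [exp_neg]; field_simp

lemma MatchesAllPatterns.biUnion_ne_univ_map {α ι β : Type*} [Fintype α] [DecidableEq β]
    {d : ℕ} {g : α → ι → Bool} (hg : MatchesAllPatterns d g) (e : α ↪ β)
    (I : Finset ι) (D : ι → Finset β) (hI : #I ≤ d)
    (hD : ∀ i ∈ I, D i = ({x | g x i} : Finset α).map e ∨
      D i = univ.map e \ ({x | g x i} : Finset α).map e) :
    I.biUnion D ≠ univ.map e := by
  intro hU
  obtain ⟨x, hx⟩ := hg I hI fun i _ => decide (D i ≠ ({x | g x i} : Finset α).map e)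
  obtain ⟨i, hi, hxi⟩ :=
    mem_biUnion.1 (hU ▸ mem_map_of_mem e (mem_univ x) : e x ∈ I.biUnion D)
  have hgx := hx i hi
  by_cases h : D i = ({x | g x i} : Finset α).map e
  · simp_all
  · rcases hD i hi with h' | h'
    · exact h h'
    · simp_all

/-- For every pair of positive integers `m` and `d` with `m ≥ 2` there
exists a special set system `β_{m,d} = {B; C_1, ..., C_m}` on `m` subsets whose
universe `B` satisfies `|B| ≤ (d + d·ln m + 2) · 2^d`. -/
theorem special_set_system_exists_randomized_size :
    ∀ m d : ℕ, 2 ≤ m → 0 < d →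
      ∃ (B : Finset ℕ) (C : Fin m → Finset ℕ),
        (∀ i, C i ⊆ B) ∧
        (∀ (I : Finset (Fin m)) (D : Fin m → Finset ℕ),
          I.card ≤ d → (∀ i ∈ I, D i = C i ∨ D i = B \ C i) →
          I.biUnion D ≠ B) ∧
        (B.card : ℝ) ≤ ((d : ℝ) + (d : ℝ) * Real.log m + 2) * 2 ^ d := by
  intro m d hm hd
  set N := ((d : ℝ) + d * log m + 2) * 2 ^ d
  have hN : 0 ≤ N := by positivity
  set n := ⌊N⌋₊
  have hn : N - 1 ≤ n := by linarith [Nat.lt_floor_add_one N]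
  obtain ⟨g, hg⟩ := exists_matchesAllPatterns (α := Fin n) (ι := Fin m) d <| by
    simpa using sum_choose_mul_two_pow_mul_lt (by omega) hd hn
  refine ⟨univ.map Fin.valEmbedding, fun i => ({x | g x i} : Finset (Fin n)).map Fin.valEmbedding,
    fun i => map_subset_map.2 (filter_subset _ _),
    fun I D hI hD => hg.biUnion_ne_univ_map _ I D hI hD, ?_⟩
  rw [card_map, card_univ, Fintype.card_fin]
  exact Nat.floor_le hN
end

section
/- There exists an absolute constant c > 0 such that for all integers n ≥ k ≥ 2 there exists an (n, k)-universal set T ⊆ {0,1}^n with |T| ≤ 2^k · k^{c · log₂ k} · log₂ n. -/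
/-!
Choose `m = 2^k · k(⌊log₂ n⌋ + 2)` strings independently and uniformly. A fixed pattern on a
fixed `k`-set is missed by all of them with probability
`(1 - 2^{-k})^m ≤ (e^{-1})^{m / 2^k} < 2^{-k(⌊log₂ n⌋ + 2)}`, and there are at most
`n^k · 2^k < 2^{k(⌊log₂ n⌋ + 2)}` patterns, so by the union bound some choice is universal; the
probability is run as a count of tuples. Finally `k(⌊log₂ n⌋ + 2) ≤ 3k log₂ n ≤ k^{3 log₂ k} log₂ n`.
-/

open Finset Fintype

section Cylinder

variable {α β : Type*} [Fintype α] [DecidableEq α] [Fintype β]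

def cylinder (S : Finset α) (g : S → β) : Finset (α → β) :=
  piFinset fun i => if h : i ∈ S then {g ⟨i, h⟩} else univ

lemma mem_cylinder {S : Finset α} {g : S → β} {t : α → β} :
    t ∈ cylinder S g ↔ ∀ i : S, t i = g i := by
  simp only [cylinder, mem_piFinset]
  refine ⟨fun h i => by simpa [i.2] using h i, fun h i => ?_⟩
  split_ifs with hi
  · exact mem_singleton.2 (h ⟨i, hi⟩)
  · exact mem_univ _

lemma card_cylinder (S : Finset α) (g : S → β) :
    #(cylinder S g) = card β ^ (card α - #S) := by
  have hfactor : ∀ i, #(if h : i ∈ S then {g ⟨i, h⟩} else (univ : Finset β)) =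
      if i ∈ Sᶜ then card β else 1 := by
    intro i
    by_cases hi : i ∈ S <;> simp [hi]
  rw [cylinder, card_piFinset, Finset.prod_congr rfl fun i _ => hfactor i,
    Fintype.prod_ite_mem, prod_const, card_compl]

end Cylinder

lemma exists_finset_card_le_forall_exists_mem {Ω ι : Type*} [Fintype Ω] [DecidableEq Ω]
    (I : Finset ι) (A : ι → Finset Ω) {b m : ℕ} (hA : ∀ i ∈ I, #(A i)ᶜ ≤ b)
    (h : #I * b ^ m < card Ω ^ m) :
    ∃ T : Finset Ω, #T ≤ m ∧ ∀ i ∈ I, ∃ t ∈ T, t ∈ A i := by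
  suffices ∃ v : Fin m → Ω, ∀ i ∈ I, ∃ j, v j ∈ A i by
    obtain ⟨v, hv⟩ := this
    refine ⟨univ.image v, card_image_le.trans_eq (Finset.card_fin m), fun i hi => ?_⟩
    obtain ⟨j, hj⟩ := hv i hi
    exact ⟨v j, mem_image_of_mem v (mem_univ j), hj⟩
  by_contra! hmiss
  have hcover : (univ : Finset (Fin m → Ω)) ⊆ I.biUnion fun i => piFinset fun _ => (A i)ᶜ := by
    intro v _
    obtain ⟨i, hi, hvi⟩ := hmiss v
    exact mem_biUnion.2 ⟨i, hi, mem_piFinset.2 fun j => mem_compl.2 (hvi j)⟩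
  have hcount : card Ω ^ m ≤ #I * b ^ m := calc card Ω ^ m = #(univ : Finset (Fin m → Ω)) := by simp
    _ ≤ #(I.biUnion fun i => piFinset fun _ => (A i)ᶜ) := card_le_card hcover
    _ ≤ ∑ i ∈ I, #(piFinset fun _ : Fin m => (A i)ᶜ) := card_biUnion_le
    _ ≤ ∑ _ ∈ I, b ^ m := sum_le_sum fun i hi => by
      rw [card_piFinset, prod_const, card_univ, Fintype.card_fin]
      exact Nat.pow_le_pow_left (hA i hi) m
    _ = #I * b ^ m := by rw [sum_const, smul_eq_mul]
  exact hcount.not_gt h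

lemma two_mul_pred_pow_lt_pow {q : ℕ} (hq : 1 ≤ q) : 2 * (q - 1) ^ q < q ^ q := by
  have hq₀ : (0 : ℝ) < q := by positivity
  have h : (1 - 1 / (q : ℝ)) ^ q < 1 / 2 :=
    (Real.one_sub_div_pow_le_exp_neg (by exact_mod_cast hq)).trans_lt Real.exp_neg_one_lt_half
  rw [one_sub_div hq₀.ne', div_pow, div_lt_iff₀ (by positivity)] at h
  rw [← Nat.cast_lt (α := ℝ)]
  push_cast [Nat.cast_sub hq]
  linarith

lemma mul_pred_pow_lt_pow {C q s : ℕ} (hq : 1 ≤ q) (hC : C < 2 ^ s) :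
    C * (q - 1) ^ (q * s) < q ^ (q * s) := by
  obtain rfl | hs := eq_or_ne s 0
  · simp_all
  calc C * (q - 1) ^ (q * s) ≤ 2 ^ s * ((q - 1) ^ q) ^ s := by rw [pow_mul]; gcongr
    _ = (2 * (q - 1) ^ q) ^ s := (mul_pow ..).symm
    _ < (q ^ q) ^ s := Nat.pow_lt_pow_left (two_mul_pred_pow_lt_pow hq) hs
    _ = q ^ (q * s) := (pow_mul ..).symm

lemma exists_universal_finset {α : Type*} [Fintype α] [DecidableEq α] {k s : ℕ}
    (hk : k ≤ card α) (hs : (card α).choose k * 2 ^ k < 2 ^ s) :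
    ∃ T : Finset (α → Bool), #T ≤ 2 ^ k * s ∧
      ∀ S : Finset α, #S = k → ∀ f : α → Bool, ∃ t ∈ T, ∀ i ∈ S, t i = f i := by
  set n := card α
  set I := (powersetCard k (univ : Finset α)).sigma fun S => (univ : Finset (S → Bool))
  have hI : #I = n.choose k * 2 ^ k := by
    rw [card_sigma, Finset.sum_congr rfl fun S hS => by
      rw [card_univ, card_fun, card_bool, card_coe, (mem_powersetCard.1 hS).2]]
    rw [sum_const, card_powersetCard, card_univ, smul_eq_mul]
  have hA : ∀ p ∈ I, #(cylinder p.1 p.2)ᶜ ≤ 2 ^ (n - k) * (2 ^ k - 1) := by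
    rintro ⟨S, g⟩ hp
    have hS : #S = k := (mem_powersetCard.1 (mem_sigma.1 hp).1).2
    rw [card_compl, card_cylinder, card_fun, card_bool, hS, Nat.mul_sub, mul_one,
      ← pow_add, Nat.sub_add_cancel hk]
  have hbound : #I * (2 ^ (n - k) * (2 ^ k - 1)) ^ (2 ^ k * s) < card (α → Bool) ^ (2 ^ k * s) :=
    calc #I * (2 ^ (n - k) * (2 ^ k - 1)) ^ (2 ^ k * s)
        = (2 ^ (n - k)) ^ (2 ^ k * s) * (#I * (2 ^ k - 1) ^ (2 ^ k * s)) := by ring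
      _ < (2 ^ (n - k)) ^ (2 ^ k * s) * (2 ^ k) ^ (2 ^ k * s) := by
        gcongr
        exact hI ▸ mul_pred_pow_lt_pow Nat.one_le_two_pow hs
      _ = card (α → Bool) ^ (2 ^ k * s) := by
        rw [← mul_pow, ← pow_add, Nat.sub_add_cancel hk, card_fun, card_bool]
  obtain ⟨T, hT, hhit⟩ := exists_finset_card_le_forall_exists_mem I _ hA hbound
  refine ⟨T, hT, fun S hS f => ?_⟩
  obtain ⟨t, ht, htS⟩ := hhit ⟨S, fun i => f i⟩ (mem_sigma.2 ⟨mem_powersetCard.2 ⟨subset_univ S, hS⟩, mem_univ _⟩)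
  exact ⟨t, ht, fun i hi => mem_cylinder.1 htS ⟨i, hi⟩⟩

lemma choose_mul_two_pow_lt (n : ℕ) {k : ℕ} (hk : k ≠ 0) :
    n.choose k * 2 ^ k < 2 ^ (k * (Nat.log 2 n + 2)) := by
  have hn : n ^ k < (2 ^ (Nat.log 2 n + 1)) ^ k :=
    Nat.pow_lt_pow_left (Nat.lt_pow_succ_log_self one_lt_two n) hk
  calc n.choose k * 2 ^ k ≤ n ^ k * 2 ^ k := by gcongr; exact Nat.choose_le_pow n k
    _ < (2 ^ (Nat.log 2 n + 1)) ^ k * 2 ^ k := by gcongr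
    _ = 2 ^ (k * (Nat.log 2 n + 2)) := by ring

lemma mul_log_add_two_le {n k : ℕ} (hk : 2 ≤ k) (hkn : k ≤ n) :
    (k * (Nat.log 2 n + 2) : ℝ) ≤ (k : ℝ) ^ (3 * Real.logb 2 k) * Real.logb 2 n := by
  have one_le_logb : ∀ {m : ℕ}, 2 ≤ m → 1 ≤ Real.logb 2 m := fun hm =>
    (Real.le_logb_iff_rpow_le one_lt_two (by positivity)).2 (by rw [Real.rpow_one]; exact_mod_cast hm)
  have hk' : (2 : ℝ) ≤ k := by exact_mod_cast hk
  have hlogn := one_le_logb (hk.trans hkn)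
  have hcube : 3 * (k : ℝ) ≤ (k : ℝ) ^ (3 * Real.logb 2 k) := calc
    3 * (k : ℝ) ≤ (k : ℝ) ^ (3 : ℝ) := by norm_cast; nlinarith [Nat.mul_le_mul hk hk]
    _ ≤ (k : ℝ) ^ (3 * Real.logb 2 k) :=
      Real.rpow_le_rpow_of_exponent_le (by linarith) (by linarith [one_le_logb hk])
  calc (k * (Nat.log 2 n + 2) : ℝ) ≤ k * (Real.logb 2 n + 2) := by
        gcongr; exact Real.natLog_le_logb n 2
    _ ≤ 3 * k * Real.logb 2 n := by nlinarith
    _ ≤ (k : ℝ) ^ (3 * Real.logb 2 k) * Real.logb 2 n := by gcongr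

/-- There exists an absolute constant `c > 0` such that for all integers
`n ≥ k ≥ 2` there exists an `(n, k)`-universal set `T ⊆ {0,1}^n` with
`|T| ≤ 2^k · k^(c·log₂ k) · log₂ n`.  Here an `(n,k)`-universal set is a set of
bitstrings of length `n` such that for every index set `S` of size `k`, the
projection of `T` onto `S` is all of `{0,1}^k`. -/
theorem universal_set_exists :
    ∃ c : ℝ, 0 < c ∧
      ∀ n k : ℕ, 2 ≤ k → k ≤ n →
        ∃ T : Finset (Fin n → Bool),
          (∀ S : Finset (Fin n), S.card = k →
            ∀ f : Fin n → Bool, ∃ t ∈ T, ∀ i ∈ S, t i = f i) ∧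
          (T.card : ℝ) ≤ 2 ^ k * (k : ℝ) ^ (c * Real.logb 2 k) * Real.logb 2 n := by
  refine ⟨3, by norm_num, fun n k hk hkn => ?_⟩
  obtain ⟨T, hT, huniv⟩ := exists_universal_finset (α := Fin n) (by simpa using hkn)
    (by simpa using choose_mul_two_pow_lt n (k := k) (by omega))
  refine ⟨T, huniv, ?_⟩
  calc (#T : ℝ) ≤ 2 ^ k * (k * (Nat.log 2 n + 2) : ℝ) := by exact_mod_cast hT
    _ ≤ 2 ^ k * ((k : ℝ) ^ (3 * Real.logb 2 k) * Real.logb 2 n) := by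
      gcongr 2 ^ k * ?_; exact mul_log_add_two_le hk hkn
    _ = _ := by ring
end

section
/- For every fixed integer b ≥ 2 there exists a constant c = c(b) > 0 such that for all integers n ≥ k ≥ 2 there exists an (n, k, b)-anti-universal set T with |T| ≤ (b/(b-1))^k · k^{c · log₂ k} · log₂ n. -/
/-!
Take `q = ((b - 1) / b) ^ k`, the fraction of functions `t : [n] → [b]` with `t (u i) ≠ v i`
for all `i`, for any fixed injective `u` and any `v`. Among all `m`-tuples of functions, those
missing a fixed pair `(u, v)` make up a fraction `(1 - q) ^ m ≤ exp (-q m)`. A union bound over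
the `N ≤ (n b) ^ k` pairs therefore yields a family of `m = ⌊log N / q⌋ + 1 ≤ (k log (n b) + 1) / q`
functions hitting every pair, and `k log (n b) + 1 ≤ k (log 2 + log b + 1) log₂ n ≤
k ^ (c log₂ k) log₂ n` once `c = 1 + log₂ (log 2 + log b + 1)`.
-/

open Finset Function

theorem card_filter_forall_apply_ne {ι α β : Type*} [Fintype ι] [Fintype α] [DecidableEq α]
    [Fintype β] [DecidableEq β] {u : ι → α} (hu : Injective u) (v : ι → β) :
    #{t : α → β | ∀ i, t (u i) ≠ v i} =
      (Fintype.card β - 1) ^ Fintype.card ι *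
        Fintype.card β ^ (Fintype.card α - Fintype.card ι) := by
  set s : α → Finset β := fun a => {y | ∀ i, u i = a → y ≠ v i}
  have hpi : ({t : α → β | ∀ i, t (u i) ≠ v i} : Finset _) = Fintype.piFinset s := by
    ext t
    simp only [mem_filter, mem_univ, true_and, Fintype.mem_piFinset, s]
    exact ⟨fun h a i hi => hi ▸ h i, fun h i => h _ i rfl⟩
  have hrange : ∀ i, s (u i) = {v i}ᶜ := by
    intro i; ext y; simp [s, hu.eq_iff]
  have hout : ∀ a ∈ (univ.image u)ᶜ, s a = univ := by
    intro a ha; ext y; simp_all [s]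
  rw [hpi, Fintype.card_piFinset, ← prod_mul_prod_compl (univ.image u),
    prod_image fun x _ y _ h => hu h, prod_congr rfl fun i _ => congrArg card (hrange i),
    prod_congr rfl fun a ha => congrArg card (hout a ha)]
  simp [card_compl, card_image_of_injective _ hu]

theorem card_filter_forall_apply_ne_eq_div_pow_mul {ι α β : Type*} [Fintype ι] [Fintype α]
    [DecidableEq α] [Fintype β] [DecidableEq β] [Nonempty β] {u : ι → α} (hu : Injective u)
    (v : ι → β) :
    (#{t : α → β | ∀ i, t (u i) ≠ v i} : ℝ) =
      ((Fintype.card β - 1) / Fintype.card β) ^ Fintype.card ι * Fintype.card (α → β) := by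
  have hβ : (Fintype.card β : ℝ) ≠ 0 := by positivity
  have hsplit : (Fintype.card β : ℝ) ^ Fintype.card α =
      Fintype.card β ^ Fintype.card ι * Fintype.card β ^ (Fintype.card α - Fintype.card ι) := by
    rw [← pow_add, Nat.add_sub_cancel' (Fintype.card_le_of_injective u hu)]
  rw [card_filter_forall_apply_ne hu, Fintype.card_fun]
  push_cast [Nat.cast_sub Fintype.card_pos, hsplit]
  rw [div_pow, ← mul_assoc, div_mul_cancel₀ _ (pow_ne_zero _ hβ)]

theorem exists_forall_exists_of_sum_card_pow_lt {α β : Type*} [Fintype β] (P : β → α → Prop)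
    [∀ t a, Decidable (P t a)] (S : Finset α) (m : ℕ)
    (h : ∑ a ∈ S, #{t | ¬P t a} ^ m < Fintype.card β ^ m) :
    ∃ f : Fin m → β, ∀ a ∈ S, ∃ j, P (f j) a := by
  classical
  by_contra! hbad
  have hsub : (univ : Finset (Fin m → β)) ⊆
      S.biUnion fun a => Fintype.piFinset fun _ => {t | ¬P t a} := by
    intro f _
    obtain ⟨a, ha, hf⟩ := hbad f
    simpa using ⟨a, ha, hf⟩
  have := (card_le_card hsub).trans card_biUnion_le
  simp only [card_univ, Fintype.card_pi, prod_const, Fintype.card_fin,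
    Fintype.card_piFinset_const] at this
  omega

theorem natCast_mul_one_sub_pow_lt_one {q : ℝ} (hq₀ : 0 < q) (hq₁ : q ≤ 1) (N : ℕ) :
    N * (1 - q) ^ (⌊Real.log N / q⌋₊ + 1) < 1 := by
  set m := ⌊Real.log N / q⌋₊ + 1
  rcases N.eq_zero_or_pos with rfl | hN
  · simp
  have hlog : Real.log N < m * q := by
    rw [← div_lt_iff₀ hq₀]
    exact_mod_cast Nat.lt_floor_add_one _
  calc (N : ℝ) * (1 - q) ^ m ≤ N * Real.exp (-q) ^ m := by
        gcongr
        exact Real.one_sub_le_exp_neg q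
    _ = N / Real.exp (m * q) := by
        rw [← Real.exp_nat_mul, mul_neg, Real.exp_neg, div_eq_mul_inv]
    _ < 1 := by
        rw [div_lt_one (Real.exp_pos _), ← Real.log_lt_iff_lt_exp (by exact_mod_cast hN)]
        exact hlog

theorem exists_finset_cover_card_le {α β : Type*} [Fintype β] [Nonempty β] (P : β → α → Prop)
    [∀ t a, Decidable (P t a)] {S : Finset α} {N : ℕ} (hSN : #S ≤ N) {q : ℝ} (hq : 0 < q)
    (hS : ∀ a ∈ S, q * Fintype.card β ≤ #{t | P t a}) :
    ∃ T : Finset β, (∀ a ∈ S, ∃ t ∈ T, P t a) ∧ (#T : ℝ) ≤ Real.log N / q + 1 := by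
  classical
  rcases S.eq_empty_or_nonempty with rfl | ⟨a₀, ha₀⟩
  · exact ⟨∅, by simp, by simp only [card_empty, Nat.cast_zero]; positivity⟩
  have hβ : (0 : ℝ) < Fintype.card β := by exact_mod_cast Fintype.card_pos
  have hq₁ : q ≤ 1 := by
    have hle : (#{t | P t a₀} : ℝ) ≤ Fintype.card β := by exact_mod_cast card_le_univ _
    exact (mul_le_iff_le_one_left hβ).1 ((hS a₀ ha₀).trans hle)
  set m := ⌊Real.log N / q⌋₊ + 1
  have hmiss : ∀ a ∈ S, (#{t | ¬P t a} : ℝ) ≤ (1 - q) * Fintype.card β := by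
    intro a ha
    have hsplit : (#{t | P t a} : ℝ) + #{t | ¬P t a} = Fintype.card β := by
      exact_mod_cast card_filter_add_card_filter_not (s := univ) (fun t => P t a)
    linarith [hS a ha]
  have hsum : ∑ a ∈ S, #{t | ¬P t a} ^ m < Fintype.card β ^ m := by
    have : (∑ a ∈ S, #{t | ¬P t a} ^ m : ℝ) < Fintype.card β ^ m := calc
      (∑ a ∈ S, #{t | ¬P t a} ^ m : ℝ) ≤ ∑ _a ∈ S, ((1 - q) * Fintype.card β) ^ m :=
          sum_le_sum fun a ha => by gcongr; exact hmiss a ha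
      _ = (#S * (1 - q) ^ m) * Fintype.card β ^ m := by
          rw [sum_const, nsmul_eq_mul, mul_pow, mul_assoc]
      _ ≤ (N * (1 - q) ^ m) * Fintype.card β ^ m := by gcongr
      _ < 1 * Fintype.card β ^ m := by
          gcongr
          exact natCast_mul_one_sub_pow_lt_one hq hq₁ _
      _ = Fintype.card β ^ m := one_mul _
    exact_mod_cast this
  obtain ⟨f, hf⟩ := exists_forall_exists_of_sum_card_pow_lt P S m hsum
  refine ⟨univ.image f, fun a ha => ?_, ?_⟩
  · obtain ⟨j, hj⟩ := hf a ha
    exact ⟨f j, mem_image_of_mem f (mem_univ j), hj⟩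
  · calc (#(univ.image f) : ℝ) ≤ m := by
          exact_mod_cast card_image_le.trans_eq (card_fin m)
      _ ≤ Real.log N / q + 1 := by
          push_cast [m]
          gcongr
          exact Nat.floor_le (by positivity)

def IsAntiUniversal {α β : Type*} (k : ℕ) (T : Finset (α → β)) : Prop :=
  ∀ u : Fin k → α, Injective u → ∀ v : Fin k → β, ∃ t ∈ T, ∀ i, t (u i) ≠ v i

theorem exists_isAntiUniversal_card_le {α β : Type*} [Fintype α] [Fintype β]
    (hβ : 2 ≤ Fintype.card β) (k : ℕ) :
    ∃ T : Finset (α → β), IsAntiUniversal k T ∧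
      (#T : ℝ) ≤ (Fintype.card β / (Fintype.card β - 1)) ^ k *
        (k * Real.log (Fintype.card α * Fintype.card β) + 1) := by
  classical
  have : Nonempty β := Fintype.card_pos_iff.1 (by omega)
  have hb : (2 : ℝ) ≤ Fintype.card β := by exact_mod_cast hβ
  set q : ℝ := ((Fintype.card β - 1) / Fintype.card β) ^ k with hq_def
  have hb₁ : (0 : ℝ) < Fintype.card β - 1 := by linarith
  have hq : 0 < q := by positivity
  have hq₁ : q ≤ 1 :=
    pow_le_one₀ (div_nonneg hb₁.le (by positivity))
      (div_le_one_of_le₀ (by linarith) (by positivity))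
  let S : Finset ((Fin k → α) × (Fin k → β)) := {p | Injective p.1}
  have hSN : #S ≤ (Fintype.card α * Fintype.card β) ^ k :=
    (card_le_univ S).trans_eq (by simp [mul_pow])
  have hS : ∀ p ∈ S, q * Fintype.card (α → β) ≤ #{t : α → β | ∀ i, t (p.1 i) ≠ p.2 i} := by
    intro p hp
    have h := card_filter_forall_apply_ne_eq_div_pow_mul (mem_filter.1 hp).2 p.2
    rw [Fintype.card_fin] at h
    -- the two sides decide `∀ i : Fin k, _` by different (but equal) instances
    exact h.symm.le.trans_eq (by congr!)
  obtain ⟨T, hcover, hcard⟩ :=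
    exists_finset_cover_card_le (fun (t : α → β) (p : (Fin k → α) × (Fin k → β)) =>
      ∀ i, t (p.1 i) ≠ p.2 i) hSN hq hS
  refine ⟨T, fun u hu v => hcover (u, v) (by simpa [S] using hu), ?_⟩
  calc (#T : ℝ) ≤ q⁻¹ * (k * Real.log (Fintype.card α * Fintype.card β)) + 1 := by
        simpa [div_eq_inv_mul, Real.log_pow] using hcard
    _ ≤ q⁻¹ * (k * Real.log (Fintype.card α * Fintype.card β)) + q⁻¹ := by
        gcongr
        exact (one_le_inv₀ hq).2 hq₁
    _ = _ := by rw [hq_def, ← inv_pow, inv_div]; ring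

theorem mul_log_mul_add_one_le {n b k : ℝ} (hn : 2 ≤ n) (hb : 1 ≤ b) (hk : 1 ≤ k) :
    k * Real.log (n * b) + 1 ≤ k * (Real.log 2 + Real.log b + 1) * Real.logb 2 n := by
  have hL : 1 ≤ Real.logb 2 n := by
    rwa [Real.le_logb_iff_rpow_le one_lt_two (by linarith), Real.rpow_one]
  have hlog_n : Real.log n = Real.log 2 * Real.logb 2 n := by
    rw [Real.logb, mul_div_cancel₀ _ (Real.log_pos one_lt_two).ne']
  have hlog_b : 0 ≤ Real.log b := Real.log_nonneg hb
  rw [Real.log_mul (by positivity) (by positivity), hlog_n]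
  nlinarith [mul_le_mul_of_nonneg_left hL (mul_nonneg (by linarith : (0 : ℝ) ≤ k) hlog_b),
    mul_le_mul hk hL zero_le_one (by linarith)]

theorem mul_le_rpow_mul_logb {k C : ℝ} (hk : 2 ≤ k) (hC : 1 ≤ C) :
    k * C ≤ k ^ ((1 + Real.logb 2 C) * Real.logb 2 k) := by
  have hk₁ : 1 ≤ k := by linarith
  have hlogC : 0 ≤ Real.logb 2 C := Real.logb_nonneg one_lt_two hC
  have hlogk : 1 ≤ Real.logb 2 k := by
    rwa [Real.le_logb_iff_rpow_le one_lt_two (by linarith), Real.rpow_one]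
  calc k * C = k * 2 ^ Real.logb 2 C := by
        rw [Real.rpow_logb two_pos (by norm_num) (by linarith)]
    _ ≤ k * k ^ Real.logb 2 C := by gcongr
    _ = k ^ (1 + Real.logb 2 C) := by rw [Real.rpow_add (by linarith), Real.rpow_one]
    _ ≤ k ^ ((1 + Real.logb 2 C) * Real.logb 2 k) :=
        Real.rpow_le_rpow_of_exponent_le hk₁ (le_mul_of_one_le_right (by positivity) hlogk)

/-- For every fixed integer `b ≥ 2` there exists a constant
`c = c(b) > 0` such that for all integers `n ≥ k ≥ 2` there exists an
`(n, k, b)`-anti-universal set `T` with `|T| ≤ (b/(b-1))^k · k^(c·log₂ k) · log₂ n`.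
An `(n,k,b)`-anti-universal set is a family of functions `t : [n] → [b]` such that
for every injective vector `u` of `k` distinct indices and every vector
`v ∈ [b]^k`, some `t ∈ T` satisfies `t (u i) ≠ v i` for every coordinate `i`. -/
theorem anti_universal_set_exists :
    ∀ b : ℕ, 2 ≤ b →
      ∃ c : ℝ, 0 < c ∧
        ∀ n k : ℕ, 2 ≤ k → k ≤ n →
          ∃ T : Finset (Fin n → Fin b),
            (∀ u : Fin k → Fin n, Function.Injective u →
              ∀ v : Fin k → Fin b, ∃ t ∈ T, ∀ i : Fin k, t (u i) ≠ v i) ∧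
            (T.card : ℝ) ≤
              ((b : ℝ) / ((b : ℝ) - 1)) ^ k * (k : ℝ) ^ (c * Real.logb 2 k) *
                Real.logb 2 n := by
  intro b hb
  set C := Real.log 2 + Real.log b + 1
  have hb₁ : (1 : ℝ) ≤ b := by exact_mod_cast (by omega : 1 ≤ b)
  have hC : 1 ≤ C := by
    have := Real.log_nonneg hb₁
    have := Real.log_pos one_lt_two
    linarith
  refine ⟨1 + Real.logb 2 C, by linarith [Real.logb_nonneg one_lt_two hC], fun n k hk hkn => ?_⟩
  have hkR : (2 : ℝ) ≤ k := by exact_mod_cast hk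
  have hnR : (2 : ℝ) ≤ n := by exact_mod_cast hk.trans hkn
  obtain ⟨T, hT, hcard⟩ := exists_isAntiUniversal_card_le (α := Fin n) (β := Fin b) (by simpa) k
  simp only [Fintype.card_fin] at hcard
  refine ⟨T, hT, hcard.trans ?_⟩
  calc ((b : ℝ) / (b - 1)) ^ k * (k * Real.log (n * b) + 1)
      ≤ (b / (b - 1)) ^ k * (k * C * Real.logb 2 n) := by
        gcongr
        exact mul_log_mul_add_one_le hnR hb₁ (by linarith)
    _ ≤ (b / (b - 1)) ^ k * (k ^ ((1 + Real.logb 2 C) * Real.logb 2 k) * Real.logb 2 n) := by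
        gcongr
        · exact Real.logb_nonneg one_lt_two (by linarith)
        · exact mul_le_rpow_mul_logb hkR hC
    _ = _ := by ring
end

section
/- For every real c ≥ 0 and every real ε > 0 there exists an integer k₀ such that for every integer k ≥ k₀ there exists m₀ such that for every integer m ≥ m₀ there exists a partition system β(m, L, k, d) with universe of size m, with L = ⌈(log₂ m)^c⌉ partitions, each partition consisting of k parts, and with d ≥ (1 − ε) · k · ln m; that is, every cover of the universe by parts of the partitions in which no two chosen parts belong to the same partition uses at least (1 − ε) · k · ln m parts. -/
open Finset Filter Real

/-!
Colour each point `x` of the universe by a vector `v x : Fin L → Fin k` and let the `j`-th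
partition group the points by their `j`-th coordinate. A family `S` of pairs `(j, i)` with distinct
`j` covers the universe only if every colour vector meets `S`, and a uniformly random vector avoids
`S` with probability `(1 - 1/k) ^ #S`. Counting the at most `(D + 1) (L k) ^ D` families of size
at most `D`, a union bound shows that `M` random vectors defeat all of them as soon as
`(D + 1) (L k) ^ D (1 - (1 - 1/k) ^ D) ^ M < 1`. With `D = ⌊(1 - ε) k ln m⌋` and `M ≈ m` this holds
for large `m`, because `(1 - 1/k) ^ D ≥ m ^ (-(1 - ε/2))` once `k ≥ 2/ε`, while the left factor
is only `exp (O ((log m) ^ (c + 1)))`. Another `L + 1` marker points make the partitions distinct.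
-/

/-- `P j i` is the `i`-th part of the `j`-th partition; a family `S` of pairs `(j, i)` on which
`Prod.fst` is injective is a choice of parts from pairwise distinct partitions. -/
structure IsPartitionSystem {ι κ α : Type*} [Fintype κ] [Fintype α] [DecidableEq α]
    (P : ι → κ → Finset α) (d : ℝ) : Prop where
  disjoint : ∀ j, ∀ i i' : κ, i ≠ i' → Disjoint (P j i) (P j i')
  biUnion_eq_univ : ∀ j, univ.biUnion (P j) = univ
  injective : Function.Injective fun j => univ.image (P j)
  le_card : ∀ S : Finset (ι × κ), Set.InjOn Prod.fst (S : Set (ι × κ)) →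
    S.biUnion (fun p => P p.1 p.2) = univ → d ≤ #S

theorem IsPartitionSystem.mono {ι κ α : Type*} [Fintype κ] [Fintype α] [DecidableEq α]
    {P : ι → κ → Finset α} {d d' : ℝ} (hP : IsPartitionSystem P d) (hd : d' ≤ d) :
    IsPartitionSystem P d' :=
  { hP with le_card := fun S hS hcov => hd.trans (hP.le_card S hS hcov) }

section Fibers

variable {ι κ α : Type*} [DecidableEq κ] [Fintype α]

def fibers (v : α → ι → κ) (j : ι) (i : κ) : Finset α := {x | v x j = i}

theorem mem_fibers {v : α → ι → κ} {j : ι} {i : κ} {x : α} : x ∈ fibers v j i ↔ v x j = i := by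
  simp [fibers]

theorem isPartitionSystem_fibers [Fintype κ] [DecidableEq α] (v : α → ι → κ) (d : ℝ)
    (hsep : ∀ j j', j ≠ j' → ∃ x y, v x j' = v y j' ∧ v x j ≠ v y j)
    (havoid : ∀ S : Finset (ι × κ), Set.InjOn Prod.fst (S : Set (ι × κ)) → (#S : ℝ) < d →
      ∃ x, ∀ p ∈ S, v x p.1 ≠ p.2) :
    IsPartitionSystem (fibers v) d where
  disjoint j i i' hne := disjoint_left.2 fun x hx hx' =>
    hne ((mem_fibers.1 hx).symm.trans (mem_fibers.1 hx'))
  biUnion_eq_univ j :=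
    eq_univ_of_forall fun x => mem_biUnion.2 ⟨v x j, mem_univ _, mem_fibers.2 rfl⟩
  injective j j' himage := by
    by_contra hne
    obtain ⟨x, y, hxy', hxy⟩ := hsep j j' hne
    -- the part of the `j'`-th partition containing `x` and `y` is a part of the `j`-th one
    replace himage : univ.image (fibers v j) = univ.image (fibers v j') := himage
    have hpart : fibers v j' (v x j') ∈ univ.image (fibers v j) :=
      himage ▸ mem_image_of_mem _ (mem_univ _)
    obtain ⟨i, -, hi⟩ := mem_image.1 hpart
    have hx : v x j = i := mem_fibers.1 (hi ▸ mem_fibers.2 rfl)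
    have hy : v y j = i := mem_fibers.1 (hi ▸ mem_fibers.2 hxy'.symm)
    exact hxy (hx.trans hy.symm)
  le_card S hS hcov := by
    by_contra! hlt
    obtain ⟨x, hx⟩ := havoid S hS hlt
    obtain ⟨p, hp, hxp⟩ := mem_biUnion.1 (hcov ▸ mem_univ x)
    exact hx p hp (mem_fibers.1 hxp)

end Fibers

section Avoiding

variable {ι κ : Type*} [DecidableEq ι] [Fintype κ] [DecidableEq κ]

theorem card_filter_mem_of_injOn {S : Finset (ι × κ)} (hS : Set.InjOn Prod.fst (S : Set (ι × κ)))
    (j : ι) : #{a | (j, a) ∈ S} = if j ∈ S.image Prod.fst then 1 else 0 := by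
  split_ifs with hj
  · obtain ⟨⟨j, a⟩, hja, rfl⟩ := mem_image.1 hj
    refine card_eq_one.2 ⟨a, eq_singleton_iff_unique_mem.2 ⟨by simpa using hja, fun b hb => ?_⟩⟩
    exact congrArg Prod.snd (hS (x₁ := (j, b)) (by simpa using hb) hja rfl)
  · exact card_eq_zero.2 (filter_eq_empty_iff.2 fun a _ ha => hj (mem_image_of_mem Prod.fst ha))

variable [Fintype ι]

def avoiding (S : Finset (ι × κ)) : Finset (ι → κ) := {f | ∀ p ∈ S, f p.1 ≠ p.2}

theorem avoiding_eq_piFinset (S : Finset (ι × κ)) :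
    avoiding S = Fintype.piFinset fun j => {a | (j, a) ∉ S} := by
  ext f
  simp only [avoiding, mem_filter, mem_univ, true_and, Fintype.mem_piFinset]
  exact ⟨fun h j hj => h _ hj rfl, fun h p hp hfp => h p.1 (hfp ▸ hp)⟩

theorem card_avoiding_of_injOn {S : Finset (ι × κ)} (hS : Set.InjOn Prod.fst (S : Set (ι × κ))) :
    #(avoiding S) = (Fintype.card κ - 1) ^ #S * Fintype.card κ ^ (Fintype.card ι - #S) := by
  have hfiber (j : ι) : #{a | (j, a) ∉ S} =
      if j ∈ S.image Prod.fst then Fintype.card κ - 1 else Fintype.card κ := by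
    rw [filter_not, card_sdiff_of_subset (filter_subset _ _), card_filter_mem_of_injOn hS,
      card_univ]
    split_ifs <;> rfl
  rw [avoiding_eq_piFinset, Fintype.card_piFinset, Finset.prod_congr rfl fun j _ => hfiber j,
    prod_ite, prod_const, prod_const, filter_mem_eq_inter, univ_inter, filter_not,
    filter_mem_eq_inter, univ_inter, card_univ_sdiff, card_image_of_injOn hS]

theorem cast_card_avoiding_of_injOn [Nonempty κ] {S : Finset (ι × κ)}
    (hS : Set.InjOn Prod.fst (S : Set (ι × κ))) :
    (#(avoiding S) : ℝ) =
      (Fintype.card κ : ℝ) ^ Fintype.card ι * (1 - (Fintype.card κ : ℝ)⁻¹) ^ #S := by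
  have hS_le : #S ≤ Fintype.card ι :=
    card_le_card_of_injOn Prod.fst (fun _ _ => mem_coe.2 (mem_univ _)) hS
  have hk : (Fintype.card κ : ℝ) ≠ 0 := by positivity
  rw [card_avoiding_of_injOn hS, ← pow_mul_pow_sub _ hS_le]
  push_cast [Nat.cast_sub (Fintype.card_pos (α := κ))]
  rw [mul_right_comm, ← mul_pow, mul_one_sub, mul_inv_cancel₀ hk]

theorem cast_card_compl_avoiding_le [Nonempty κ] {S : Finset (ι × κ)} {D : ℕ}
    (hS : Set.InjOn Prod.fst (S : Set (ι × κ))) (hSD : #S ≤ D) :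
    (#(avoiding S)ᶜ : ℝ) ≤
      (Fintype.card κ : ℝ) ^ Fintype.card ι * (1 - (1 - (Fintype.card κ : ℝ)⁻¹) ^ D) := by
  have hk : (1 : ℝ) ≤ Fintype.card κ := Nat.one_le_cast.2 Fintype.card_pos
  have hr0 : 0 ≤ 1 - (Fintype.card κ : ℝ)⁻¹ := sub_nonneg.2 (inv_le_one_of_one_le₀ hk)
  have hpow := pow_le_pow_of_le_one hr0 (sub_le_self _ (by positivity)) hSD
  rw [card_compl, Nat.cast_sub (card_le_univ _), cast_card_avoiding_of_injOn hS, Fintype.card_fun]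
  push_cast
  nlinarith [pow_pos (zero_lt_one.trans_le hk) (Fintype.card ι)]

end Avoiding

theorem card_filter_card_le_le {α : Type*} [Fintype α] [Nonempty α] (D : ℕ) :
    #{S : Finset α | #S ≤ D} ≤ (D + 1) * Fintype.card α ^ D := by
  classical
  calc #{S : Finset α | #S ≤ D}
      ≤ #((range (D + 1)).biUnion fun t => powersetCard t (univ : Finset α)) := by
        refine card_le_card fun S hS =>
          mem_biUnion.2 ⟨#S, ?_, mem_powersetCard.2 ⟨subset_univ S, rfl⟩⟩
        simpa [Nat.lt_succ_iff] using hS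
    _ ≤ ∑ t ∈ range (D + 1), (Fintype.card α).choose t := by
        simpa only [card_powersetCard, card_univ] using
          card_biUnion_le (s := range (D + 1)) (t := fun t => powersetCard t (univ : Finset α))
    _ ≤ ∑ _t ∈ range (D + 1), Fintype.card α ^ D := sum_le_sum fun t ht =>
        (Nat.choose_le_pow _ t).trans
          (Nat.pow_le_pow_right Fintype.card_pos (by simpa [Nat.lt_succ_iff] using ht))
    _ = (D + 1) * Fintype.card α ^ D := by simp

theorem exists_forall_exists_mem_avoiding {ι κ β : Type*} [Fintype ι] [DecidableEq ι] [Nonempty ι]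
    [Fintype κ] [DecidableEq κ] [Nonempty κ] [Fintype β] (D : ℕ)
    (h : ((D : ℝ) + 1) * ((Fintype.card ι : ℝ) * Fintype.card κ) ^ D *
      (1 - (1 - (Fintype.card κ : ℝ)⁻¹) ^ D) ^ Fintype.card β < 1) :
    ∃ w : β → ι → κ, ∀ S : Finset (ι × κ), Set.InjOn Prod.fst (S : Set (ι × κ)) → #S ≤ D →
      ∃ y, w y ∈ avoiding S := by
  classical
  set k : ℝ := (Fintype.card κ : ℝ)
  set L := Fintype.card ι
  set M := Fintype.card β
  set p : ℝ := k ^ L * (1 - (1 - k⁻¹) ^ D)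
  set 𝒮 : Finset (Finset (ι × κ)) := {S | Set.InjOn Prod.fst (S : Set (ι × κ)) ∧ #S ≤ D}
  set bad : Finset (ι × κ) → Finset (β → ι → κ) :=
    fun S => Fintype.piFinset fun _ => (avoiding S)ᶜ
  have hr0 : 0 ≤ 1 - k⁻¹ := sub_nonneg.2 (inv_le_one_of_one_le₀ (Nat.one_le_cast.2 Fintype.card_pos))
  have hp0 : 0 ≤ p :=
    mul_nonneg (by positivity) (sub_nonneg.2 (pow_le_one₀ hr0 (sub_le_self _ (by positivity))))
  have hbad (S : Finset (ι × κ)) (hS : S ∈ 𝒮) : (#(bad S) : ℝ) ≤ p ^ M := by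
    obtain ⟨hinj, hSD⟩ := (mem_filter.1 hS).2
    simpa [bad, Fintype.card_piFinset] using
      pow_le_pow_left₀ (Nat.cast_nonneg _) (cast_card_compl_avoiding_le hinj hSD) M
  have hcard : #(𝒮.biUnion bad) < #(univ : Finset (β → ι → κ)) := by
    have h𝒮 : (#𝒮 : ℝ) ≤ ((D : ℝ) + 1) * (L * k) ^ D := by
      have := (card_le_card fun S (hS : S ∈ 𝒮) =>
        mem_filter.2 ⟨mem_univ S, (mem_filter.1 hS).2.2⟩).trans (card_filter_card_le_le (α := ι × κ) D)
      rw [Fintype.card_prod] at this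
      simp only [k, L]
      exact_mod_cast this
    have hkL : (0 : ℝ) < (k ^ L) ^ M := by positivity
    have : (#(𝒮.biUnion bad) : ℝ) < #(univ : Finset (β → ι → κ)) := calc
      (#(𝒮.biUnion bad) : ℝ) ≤ ∑ S ∈ 𝒮, (#(bad S) : ℝ) := by exact_mod_cast card_biUnion_le
      _ ≤ #𝒮 * p ^ M := by simpa using sum_le_sum hbad
      _ ≤ ((D + 1) * (L * k) ^ D) * p ^ M := by gcongr
      _ = ((D + 1) * (L * k) ^ D * (1 - (1 - k⁻¹) ^ D) ^ M) * (k ^ L) ^ M := by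
        simp only [p, mul_pow]; ring
      _ < (k ^ L) ^ M := mul_lt_of_lt_one_left hkL h
      _ = #(univ : Finset (β → ι → κ)) := by simp [k, L, M]
    exact_mod_cast this
  obtain ⟨w, -, hw⟩ := exists_mem_notMem_of_card_lt_card hcard
  refine ⟨w, fun S hS hSD => ?_⟩
  by_contra! hcov
  exact hw (mem_biUnion.2 ⟨S, mem_filter.2 ⟨mem_univ S, hS, hSD⟩,
    Fintype.mem_piFinset.2 fun y => mem_compl.2 (hcov y)⟩)

theorem exists_isPartitionSystem {k L D m : ℕ} (hk : 2 ≤ k) (hL : 0 < L) (hm : L + 1 ≤ m)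
    (h : ((D : ℝ) + 1) * ((L : ℝ) * k) ^ D * (1 - (1 - (k : ℝ)⁻¹) ^ D) ^ (m - (L + 1)) < 1) :
    ∃ P : Fin L → Fin k → Finset (Fin m), IsPartitionSystem P (D + 1) := by
  obtain ⟨M, rfl⟩ := Nat.exists_eq_add_of_le hm
  have : Nonempty (Fin L) := Fin.pos_iff_nonempty.1 hL
  have : Nonempty (Fin k) := ⟨⟨0, by omega⟩⟩
  obtain ⟨w, hw⟩ := exists_forall_exists_mem_avoiding (ι := Fin L) (κ := Fin k) (β := Fin M) D
    (by simpa using h)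
  let marker : Fin (L + 1) → Fin L → Fin k :=
    fun x j => if x = j.castSucc then ⟨1, hk⟩ else ⟨0, by omega⟩
  refine ⟨fibers (Fin.append marker w), isPartitionSystem_fibers _ _ ?_ ?_⟩
  · intro j j' hne
    refine ⟨Fin.castAdd M j.castSucc, Fin.castAdd M (Fin.last L), ?_, ?_⟩
    · simp [marker, hne, (Fin.castSucc_ne_last j').symm]
    · simp [marker, (Fin.castSucc_ne_last j).symm]
  · intro S hS hSD
    obtain ⟨y, hy⟩ := hw S hS (Nat.lt_succ_iff.1 (by exact_mod_cast hSD))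
    exact ⟨Fin.natAdd (L + 1) y, by simpa [avoiding] using hy⟩

theorem add_one_mul_pow_mul_one_sub_pow_le_exp (D M : ℕ) {n q : ℝ} (hn : 0 ≤ n) (hq : q ≤ 1) :
    ((D : ℝ) + 1) * n ^ D * (1 - q) ^ M ≤ exp (D * (n + 1) - q * M) := by
  have hD : (D : ℝ) + 1 ≤ exp D := add_one_le_exp _
  have hn' : n ^ D ≤ exp (D * n) := by
    rw [exp_nat_mul]
    exact pow_le_pow_left₀ hn ((le_add_of_nonneg_right zero_le_one).trans (add_one_le_exp n)) D
  have hq' : (1 - q) ^ M ≤ exp (M * -q) := by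
    rw [exp_nat_mul]
    exact pow_le_pow_left₀ (sub_nonneg.2 hq) (one_sub_le_exp_neg q) M
  calc ((D : ℝ) + 1) * n ^ D * (1 - q) ^ M ≤ exp D * exp (D * n) * exp (M * -q) := by
        gcongr
    _ = exp (D * (n + 1) - q * M) := by rw [← exp_add, ← exp_add]; ring_nf

theorem exp_neg_div_le_one_sub_inv_pow {k : ℝ} (hk : 1 < k) (D : ℕ) :
    exp (-(D / (k - 1))) ≤ (1 - k⁻¹) ^ D := by
  have hk0 : 0 < k - 1 := sub_pos.2 hk
  have hbase : exp (-(k - 1)⁻¹) ≤ 1 - k⁻¹ := by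
    rw [exp_neg, inv_le_comm₀ (exp_pos _) (sub_pos.2 (inv_lt_one_of_one_lt₀ hk))]
    calc (1 - k⁻¹)⁻¹ = (k - 1)⁻¹ + 1 := by field_simp; ring
      _ ≤ exp (k - 1)⁻¹ := add_one_le_exp _
  calc exp (-(D / (k - 1))) = exp (-(k - 1)⁻¹) ^ D := by rw [← exp_nat_mul]; ring_nf
    _ ≤ (1 - k⁻¹) ^ D := pow_le_pow_left₀ (exp_pos _).le hbase D

theorem eventually_mul_mul_rpow_add_lt_exp (C : ℝ) {c δ : ℝ} (hc : 0 ≤ c) (hδ : 0 < δ) :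
    ∀ᶠ u in atTop, 1 ≤ u ∧ C * u * ((2 * u) ^ c + 2) < exp (δ * u) / 2 := by
  set K := 6 * (|C| + 1) * 2 ^ c
  filter_upwards [(tendsto_exp_mul_div_rpow_atTop (c + 1) δ hδ).eventually_ge_atTop K,
    eventually_ge_atTop 1] with u hK hu
  have hu0 : 0 < u := zero_lt_one.trans_le hu
  have h2u : 1 ≤ (2 * u) ^ c := one_le_rpow (by linarith) hc
  have hpow : u * (2 * u) ^ c = 2 ^ c * u ^ (c + 1) := by
    rw [mul_rpow zero_le_two hu0.le, rpow_add_one hu0.ne']; ring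
  have hexp : K * u ^ (c + 1) ≤ exp (δ * u) := (le_div_iff₀ (rpow_pos_of_pos hu0 _)).1 hK
  have hpos : 0 < 2 ^ c * u ^ (c + 1) := by positivity
  refine ⟨hu, ?_⟩
  calc C * u * ((2 * u) ^ c + 2) ≤ |C| * u * (3 * (2 * u) ^ c) := by
        gcongr
        · exact le_abs_self C
        · linarith
    _ = 3 * |C| * (2 ^ c * u ^ (c + 1)) := by rw [← hpow]; ring
    _ < K / 2 * u ^ (c + 1) := by
        simp only [K]; nlinarith
    _ ≤ exp (δ * u) / 2 := by linarith

theorem union_bound_lt_one {δ u ℓ : ℝ} {k L D m : ℕ} (hδ0 : 0 ≤ δ) (hδ1 : δ ≤ 1) (hk : 2 ≤ k)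
    (hm : (m : ℝ) = exp u) (hu : 1 ≤ u) (hL : (L : ℝ) + 1 ≤ ℓ)
    (hD : (D : ℝ) ≤ (1 - δ) * (k - 1) * u) (hbound : (k : ℝ) ^ 2 * u * ℓ < exp (δ * u) / 2) :
    L + 1 ≤ m ∧
      ((D : ℝ) + 1) * ((L : ℝ) * k) ^ D * (1 - (1 - (k : ℝ)⁻¹) ^ D) ^ (m - (L + 1)) < 1 := by
  have hk2 : (2 : ℝ) ≤ k := by exact_mod_cast hk
  have hℓ : 1 ≤ ℓ := le_trans (by simp) hL
  have hku : 1 ≤ (k : ℝ) ^ 2 * u := by nlinarith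
  have hLm : (L : ℝ) + 1 ≤ m / 2 := calc
    (L : ℝ) + 1 ≤ (k : ℝ) ^ 2 * u * ℓ := hL.trans (le_mul_of_one_le_left (by linarith) hku)
    _ ≤ exp (δ * u) / 2 := hbound.le
    _ ≤ m / 2 := by rw [hm]; gcongr; nlinarith
  have hLm' : L + 1 ≤ m := by exact_mod_cast (show ((L + 1 : ℕ) : ℝ) ≤ m by push_cast; linarith)
  have hM : (m : ℝ) / 2 ≤ ((m - (L + 1) : ℕ) : ℝ) := by
    rw [Nat.cast_sub hLm']; push_cast; linarith
  have hr0 : 0 ≤ 1 - (k : ℝ)⁻¹ := sub_nonneg.2 (inv_le_one_of_one_le₀ (by linarith))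
  set q := (1 - (k : ℝ)⁻¹) ^ D
  have hq : exp (-((1 - δ) * u)) ≤ q := by
    refine le_trans (exp_le_exp.2 (neg_le_neg ?_)) (exp_neg_div_le_one_sub_inv_pow (by linarith) D)
    rw [div_le_iff₀ (by linarith)]; linarith
  have hqM : exp (δ * u) / 2 ≤ q * (m - (L + 1) : ℕ) := calc
    exp (δ * u) / 2 = exp (-((1 - δ) * u)) * (m / 2) := by
        rw [hm, mul_div_assoc', ← exp_add]; ring_nf
    _ ≤ q * (m - (L + 1) : ℕ) := mul_le_mul hq hM (by positivity) (pow_nonneg hr0 D)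
  have hDn : (D : ℝ) * (L * k + 1) ≤ (k : ℝ) ^ 2 * u * ℓ := calc
    (D : ℝ) * (L * k + 1) ≤ (k * u) * (k * ℓ) := by
        gcongr
        · nlinarith
        · nlinarith
    _ = (k : ℝ) ^ 2 * u * ℓ := by ring
  refine ⟨hLm', ?_⟩
  calc ((D : ℝ) + 1) * ((L : ℝ) * k) ^ D * (1 - q) ^ (m - (L + 1))
      ≤ exp (D * (L * k + 1) - q * (m - (L + 1) : ℕ)) :=
        add_one_mul_pow_mul_one_sub_pow_le_exp D _ (by positivity)
          (pow_le_one₀ hr0 (by simp))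
    _ < 1 := exp_lt_one_iff.2 (by linarith)

theorem cast_ceil_logb_rpow_add_one_le {x c : ℝ} (hx : 1 ≤ x) (hc : 0 ≤ c) :
    (⌈logb 2 x ^ c⌉₊ : ℝ) + 1 ≤ (2 * log x) ^ c + 2 := by
  have hlogb : 0 ≤ logb 2 x := logb_nonneg one_lt_two hx
  have hlogb_le : logb 2 x ≤ 2 * log x := by
    rw [logb, div_le_iff₀ (log_pos one_lt_two)]
    nlinarith [log_two_gt_d9, log_nonneg hx]
  have hceil := Nat.ceil_lt_add_one (rpow_nonneg hlogb c)
  have hrpow := rpow_le_rpow hlogb hlogb_le hc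
  linarith

theorem cast_floor_one_sub_mul_le {ε k u : ℝ} (hε : 0 < ε) (hε1 : ε ≤ 1) (hk : 2 / ε ≤ k)
    (hu : 0 ≤ u) : (⌊(1 - ε) * k * u⌋₊ : ℝ) ≤ (1 - ε / 2) * (k - 1) * u := by
  have hkε : 2 ≤ k * ε := (div_le_iff₀ hε).1 hk
  have hk0 : 0 ≤ k := (div_nonneg zero_le_two hε.le).trans hk
  refine (Nat.floor_le (by have := sub_nonneg.2 hε1; positivity)).trans ?_
  exact mul_le_mul_of_nonneg_right (by nlinarith) hu

theorem eventually_exists_isPartitionSystem {c ε : ℝ} (hc : 0 ≤ c) (hε : 0 < ε) (hε1 : ε ≤ 1)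
    {k : ℕ} (hk : 2 ≤ k) (hkε : 2 / ε ≤ k) :
    ∀ᶠ m : ℕ in atTop, ∃ P : Fin ⌈logb 2 m ^ c⌉₊ → Fin k → Finset (Fin m),
      IsPartitionSystem P ((1 - ε) * k * log m) := by
  filter_upwards [(tendsto_log_atTop.comp tendsto_natCast_atTop_atTop).eventually
    (eventually_mul_mul_rpow_add_lt_exp ((k : ℝ) ^ 2) hc (half_pos hε))] with m hm
  obtain ⟨hu, hbound⟩ : 1 ≤ log m ∧ _ := hm
  have hm1 : 1 < (m : ℝ) := by
    by_contra! h
    linarith [log_nonpos (Nat.cast_nonneg m) h]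
  obtain ⟨hLm, hlt⟩ := union_bound_lt_one (half_pos hε).le (by linarith) hk
    (exp_log (zero_lt_one.trans hm1)).symm hu (cast_ceil_logb_rpow_add_one_le hm1.le hc)
    (cast_floor_one_sub_mul_le hε hε1 hkε (zero_le_one.trans hu)) hbound
  obtain ⟨P, hP⟩ := exists_isPartitionSystem hk
    (Nat.ceil_pos.2 (rpow_pos_of_pos (logb_pos one_lt_two hm1) c)) hLm hlt
  exact ⟨P, hP.mono (by exact_mod_cast (Nat.lt_floor_add_one _).le)⟩

/-- For every real `c ≥ 0` and every real `ε > 0` there exists `k₀`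
such that for every `k ≥ k₀` there exists `m₀` such that for every `m ≥ m₀` there is
a partition system `β(m, L, k, d)` with universe of size `m`, with
`L = ⌈(log₂ m)^c⌉` distinct partitions, each consisting of `k` pairwise disjoint
parts covering the universe, such that every cover of the universe by parts in
which no two chosen parts belong to the same partition uses at least
`(1 − ε)·k·ln m` parts. -/
theorem partition_system_exists :
    ∀ c : ℝ, 0 ≤ c → ∀ ε : ℝ, 0 < ε →
      ∃ k₀ : ℕ, ∀ k : ℕ, k₀ ≤ k →
        ∃ m₀ : ℕ, ∀ m : ℕ, m₀ ≤ m →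
          ∃ P : Fin ⌈(Real.logb 2 m) ^ c⌉₊ → Fin k → Finset (Fin m),
            (∀ j, ∀ i i' : Fin k, i ≠ i' → Disjoint (P j i) (P j i')) ∧
            (∀ j, Finset.univ.biUnion (P j) = Finset.univ) ∧
            Function.Injective (fun j => Finset.univ.image (P j)) ∧
            (∀ S : Finset (Fin ⌈(Real.logb 2 m) ^ c⌉₊ × Fin k),
              (∀ x ∈ S, ∀ y ∈ S, x.1 = y.1 → x = y) →
              S.biUnion (fun p => P p.1 p.2) = Finset.univ →
              (1 - ε) * k * Real.log m ≤ S.card) := by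
  intro c hc ε hε
  set ε' := min ε 1
  refine ⟨⌈2 / ε'⌉₊ + 2, fun k hk => ?_⟩
  have hkε : 2 / ε' ≤ k := (Nat.le_ceil _).trans (by exact_mod_cast (by omega : ⌈2 / ε'⌉₊ ≤ k))
  obtain ⟨m₀, hm₀⟩ := eventually_atTop.1 <| eventually_exists_isPartitionSystem hc
    (lt_min hε one_pos) (min_le_right ε 1) (by omega) hkε
  refine ⟨m₀, fun m hm => ?_⟩
  obtain ⟨P, hP⟩ := hm₀ m hm
  have hd : (1 - ε) * k * log m ≤ (1 - ε') * k * log m := by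
    have := log_natCast_nonneg m
    gcongr
    exact min_le_left ε 1
  have hP' := hP.mono hd
  exact ⟨P, hP'.disjoint, hP'.biUnion_eq_univ, hP'.injective,
    fun S hS => hP'.le_card S fun x hx y hy => hS x hx y hy⟩
end

section
/- For every integer k ≥ 2 there exists a constant c_k > 0 such that for all integers d ≥ 2 and L ≥ 2 there exists a partition system β(m, L, k, d) — with L partitions of a universe of size m, each partition into k parts, such that any cover of the universe using no two parts from the same partition has at least d parts — whose universe size satisfies m ≤ (k/(k−1))^d · d^{c_k · log₂ d} · log₂ L. -/
open Finset

namespace PartSysAux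

/-- matrices whose rows all lie in `B` number at most `B.card ^ m`. -/
lemma card_matrix_le {m : ℕ} {X : Type*} [Fintype X] [DecidableEq X]
    (p : (Fin m → X) → Prop) [DecidablePred p] (B : Finset X)
    (h : ∀ M, p M → ∀ x, M x ∈ B) :
    (univ.filter p).card ≤ B.card ^ m := by
  have hsub : univ.filter p ⊆ Fintype.piFinset (fun _ : Fin m => B) := by
    intro M hM
    rw [Fintype.mem_piFinset]
    exact h M (mem_filter.mp hM).2
  calc (univ.filter p).card ≤ (Fintype.piFinset (fun _ : Fin m => B)).card :=
        card_le_card hsub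
    _ = ∏ _x : Fin m, B.card := Fintype.card_piFinset _
    _ = B.card ^ m := by simp

/-- number of finsets of size at most `t` -/
lemma card_small_le {X : Type*} [Fintype X] [DecidableEq X] (t : ℕ) :
    ((univ : Finset (Finset X)).filter (fun S => S.card ≤ t)).card
      ≤ (Fintype.card X + 1) ^ t := by
  classical
  set dec : (Fin t → Option X) → Finset X :=
    fun f => univ.biUnion (fun i => (f i).toFinset) with hdec
  have hsub : (univ.filter (fun S : Finset X => S.card ≤ t)) ⊆ univ.image dec := by
    intro S hS
    have hcard : S.card ≤ t := (mem_filter.mp hS).2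
    rw [mem_image]
    refine ⟨fun i => if h : (i : ℕ) < S.card then some ((S.equivFin.symm ⟨i, h⟩ : S) : X)
      else none, mem_univ _, ?_⟩
    ext x
    simp only [hdec, mem_biUnion, mem_univ, true_and]
    constructor
    · rintro ⟨i, hi⟩
      rw [Option.mem_toFinset] at hi
      by_cases h : (i : ℕ) < S.card
      · rw [dif_pos h] at hi
        rw [Option.mem_def, Option.some.injEq] at hi
        rw [← hi]
        exact (S.equivFin.symm ⟨(i : ℕ), h⟩).2
      · rw [dif_neg h] at hi
        exact absurd hi (by simp)
    · intro hx
      have hi0 : ((S.equivFin ⟨x, hx⟩ : Fin S.card) : ℕ) < S.card :=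
        (S.equivFin ⟨x, hx⟩).2
      refine ⟨⟨(S.equivFin ⟨x, hx⟩ : Fin S.card), lt_of_lt_of_le hi0 hcard⟩, ?_⟩
      rw [Option.mem_toFinset]
      rw [dif_pos hi0]
      rw [Option.mem_def, Option.some.injEq]
      have : (⟨((S.equivFin ⟨x, hx⟩ : Fin S.card) : ℕ), hi0⟩ : Fin S.card)
          = S.equivFin ⟨x, hx⟩ := by
        apply Fin.ext; rfl
      rw [this, Equiv.symm_apply_apply]
  calc ((univ : Finset (Finset X)).filter (fun S => S.card ≤ t)).card
      ≤ (univ.image dec).card := card_le_card hsub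
    _ ≤ (univ : Finset (Fin t → Option X)).card := card_image_le
    _ = (Fintype.card X + 1) ^ t := by
        rw [card_univ, Fintype.card_fun]
        simp


variable {k L : ℕ}

/-- Rows failing to avoid a rainbow constraint set `S` of size ≤ t are at most
`(1 - ((k-1)/k)^t) * k^L` many. -/
lemma rows1 (hk : 2 ≤ k) (t : ℕ) (S : Finset (Fin L × Fin k))
    (hR : ∀ x ∈ S, ∀ y ∈ S, x.1 = y.1 → x = y) (hSc : S.card ≤ t) :
    ((univ.filter (fun v : Fin L → Fin k => ¬ ∀ p ∈ S, v p.1 ≠ p.2)).card : ℝ)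
      ≤ (1 - (((k : ℝ) - 1) / k) ^ t) * (k : ℝ) ^ L := by
  classical
  have hk0 : (0 : ℝ) < (k : ℝ) := by positivity
  set forb : Fin L → Finset (Fin k) :=
    fun j => (S.filter (fun p => p.1 = j)).image Prod.snd with hforb
  set allowed : Fin L → Finset (Fin k) := fun j => univ \ forb j with hallowed
  have hmem : ∀ v : Fin L → Fin k, (∀ p ∈ S, v p.1 ≠ p.2) ↔ ∀ j, v j ∈ allowed j := by
    intro v
    constructor
    · intro h j
      simp only [hallowed, mem_sdiff, mem_univ, true_and, hforb, mem_image, mem_filter,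
        not_exists, not_and]
      rintro p ⟨hpS, hpj⟩ hpv
      exact h p hpS (by rw [hpj, hpv])
    · intro h p hpS hpv
      have := h p.1
      simp only [hallowed, mem_sdiff, mem_univ, true_and, hforb, mem_image, mem_filter,
        not_exists, not_and] at this
      exact this p ⟨hpS, rfl⟩ hpv.symm
  have hgood : univ.filter (fun v : Fin L → Fin k => ∀ p ∈ S, v p.1 ≠ p.2)
      = Fintype.piFinset allowed := by
    ext v
    simp only [mem_filter, mem_univ, true_and, Fintype.mem_piFinset]
    exact hmem v
  -- the count of good rows
  set F := S.image Prod.fst with hF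
  have hFcard : F.card ≤ t := le_trans card_image_le hSc
  have hforb_le : ∀ j, (forb j).card ≤ 1 := by
    intro j
    apply le_trans card_image_le
    apply card_le_one.mpr
    intro a ha b hb
    simp only [mem_filter] at ha hb
    exact hR a ha.1 b hb.1 (ha.2.trans hb.2.symm)
  have hallowed_card : ∀ j, (allowed j).card = k - (forb j).card := by
    intro j
    rw [hallowed]
    rw [card_sdiff_of_subset (subset_univ _)]
    simp
  have hnotF : ∀ j ∉ F, (allowed j).card = k := by
    intro j hj
    have hfe : S.filter (fun p => p.1 = j) = ∅ := by
      rw [filter_eq_empty_iff]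
      intro p hp hpj
      exact hj (mem_image.mpr ⟨p, hp, hpj⟩)
    have : forb j = ∅ := by rw [hforb]; simp only; rw [hfe]; simp
    rw [hallowed_card, this]
    simp
  -- product lower bound in ℕ
  have hFsub : F ⊆ univ := subset_univ F
  have hFL : F.card ≤ L := by
    have := card_le_card hFsub
    simpa using this
  have hprod : (k - 1) ^ F.card * k ^ (L - F.card) ≤ ∏ j, (allowed j).card := by
    rw [← Finset.prod_sdiff hFsub]
    have h1 : ∏ j ∈ univ \ F, (allowed j).card = k ^ (L - F.card) := by
      rw [Finset.prod_congr rfl (fun j hj => hnotF j (mem_sdiff.mp hj).2)]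
      rw [Finset.prod_const, card_sdiff_of_subset hFsub]
      simp
    have h2 : (k - 1) ^ F.card ≤ ∏ j ∈ F, (allowed j).card := by
      rw [← Finset.prod_const]
      apply Finset.prod_le_prod'
      intro j _
      rw [hallowed_card]
      have := hforb_le j
      omega
    calc (k - 1) ^ F.card * k ^ (L - F.card)
        = k ^ (L - F.card) * (k - 1) ^ F.card := by ring
      _ ≤ (∏ j ∈ univ \ F, (allowed j).card) * ∏ j ∈ F, (allowed j).card := by
          rw [h1]
          exact Nat.mul_le_mul_left _ h2
  -- real lower bound on good rows
  have hbase0 : (0 : ℝ) ≤ ((k : ℝ) - 1) / k := by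
    apply div_nonneg _ (le_of_lt hk0)
    have : (2 : ℝ) ≤ (k : ℝ) := by exact_mod_cast hk
    linarith
  have hbase1 : ((k : ℝ) - 1) / k ≤ 1 := by
    rw [div_le_one hk0]; linarith
  have hgood_card : (((k : ℝ) - 1) / k) ^ t * (k : ℝ) ^ L
      ≤ ((univ.filter (fun v : Fin L → Fin k => ∀ p ∈ S, v p.1 ≠ p.2)).card : ℝ) := by
    rw [hgood, Fintype.card_piFinset]
    have hcast : (((k - 1) ^ F.card * k ^ (L - F.card) : ℕ) : ℝ)
        = (((k : ℝ) - 1) / k) ^ F.card * (k : ℝ) ^ L := by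
      push_cast [Nat.cast_sub (by omega : 1 ≤ k)]
      rw [div_pow]
      rw [div_mul_eq_mul_div]
      rw [eq_div_iff (by positivity)]
      rw [mul_assoc, mul_comm ((k:ℝ) ^ (L - F.card)) _, ← pow_add]
      rw [Nat.add_sub_cancel' hFL]
    calc (((k : ℝ) - 1) / k) ^ t * (k : ℝ) ^ L
        ≤ (((k : ℝ) - 1) / k) ^ F.card * (k : ℝ) ^ L := by
          apply mul_le_mul_of_nonneg_right _ (by positivity)
          exact pow_le_pow_of_le_one hbase0 hbase1 hFcard
      _ = (((k - 1) ^ F.card * k ^ (L - F.card) : ℕ) : ℝ) := hcast.symm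
      _ ≤ ((∏ j, (allowed j).card : ℕ) : ℝ) := by exact_mod_cast hprod
  -- conclude
  have hsplit := Finset.card_filter_add_card_filter_not
    (s := (univ : Finset (Fin L → Fin k))) (p := fun v => ∀ p ∈ S, v p.1 ≠ p.2)
  have huniv : (univ : Finset (Fin L → Fin k)).card = k ^ L := by
    rw [card_univ, Fintype.card_fun]
    simp
  have : ((univ.filter (fun v : Fin L → Fin k => ¬ ∀ p ∈ S, v p.1 ≠ p.2)).card : ℝ)
      = (k : ℝ) ^ L - ((univ.filter (fun v : Fin L → Fin k => ∀ p ∈ S, v p.1 ≠ p.2)).card : ℝ) := by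
    have : ((univ.filter (fun v : Fin L → Fin k => ∀ p ∈ S, v p.1 ≠ p.2)).card : ℝ)
        + ((univ.filter (fun v : Fin L → Fin k => ¬ ∀ p ∈ S, v p.1 ≠ p.2)).card : ℝ)
        = (k : ℝ) ^ L := by
      rw [← Nat.cast_add, hsplit, huniv]
      push_cast
      ring
    linarith
  rw [this]
  nlinarith [hgood_card]

/-- Rows making partition `j`'s part `z` coincide with partition `j'`'s part `i`
are at most `(1 - (k-1)/k^2) * k^L` many. -/
lemma rows2 (hk : 2 ≤ k) (hL : 2 ≤ L) {j j' : Fin L} (hjj : j ≠ j') (z i : Fin k) :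
    ((univ.filter (fun v : Fin L → Fin k => (v j = z ↔ v j' = i))).card : ℝ)
      ≤ (1 - ((k : ℝ) - 1) / (k : ℝ) ^ 2) * (k : ℝ) ^ L := by
  classical
  have hk0 : (0 : ℝ) < (k : ℝ) := by positivity
  set g : Fin L → Finset (Fin k) :=
    fun a => if a = j then {z} else if a = j' then univ.erase i else univ with hg
  have hsub : Fintype.piFinset g ⊆
      univ.filter (fun v : Fin L → Fin k => ¬ (v j = z ↔ v j' = i)) := by
    intro v hv
    rw [Fintype.mem_piFinset] at hv
    have h1 : v j = z := by
      have := hv j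
      simp only [hg, if_pos rfl] at this
      simpa using this
    have h2 : v j' ≠ i := by
      have := hv j'
      simp only [hg, if_neg (Ne.symm hjj), if_pos rfl] at this
      exact ne_of_mem_erase this
    simp only [mem_filter, mem_univ, true_and]
    intro hiff
    exact h2 (hiff.mp h1)
  have hgcard : (k - 1) * k ^ (L - 2) ≤ (Fintype.piFinset g).card := by
    rw [Fintype.card_piFinset]
    set F2 : Finset (Fin L) := {j, j'} with hF2
    have hF2sub : F2 ⊆ univ := subset_univ _
    have hF2card : F2.card = 2 := card_pair hjj
    rw [← Finset.prod_sdiff hF2sub]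
    have h1 : ∏ a ∈ univ \ F2, (g a).card = k ^ (L - 2) := by
      rw [Finset.prod_congr rfl (fun a ha => ?_), Finset.prod_const,
        card_sdiff_of_subset hF2sub, card_univ, Fintype.card_fin, hF2card]
      have ha' := (mem_sdiff.mp ha).2
      simp only [hF2, mem_insert, mem_singleton, not_or] at ha'
      simp only [hg, if_neg ha'.1, if_neg ha'.2]
      simp
    have h2 : ∏ a ∈ F2, (g a).card = k - 1 := by
      rw [hF2, Finset.prod_pair hjj]
      have e1 : g j = {z} := by simp [hg]
      have e2 : g j' = univ.erase i := by simp [hg, if_neg (fun h : j' = j => hjj h.symm)]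
      rw [e1, e2, card_singleton, card_erase_of_mem (mem_univ i), card_univ, Fintype.card_fin,
        one_mul]
    rw [h1, h2, Nat.mul_comm]
  -- conclude
  have hsplit := Finset.card_filter_add_card_filter_not
    (s := (univ : Finset (Fin L → Fin k))) (p := fun v => (v j = z ↔ v j' = i))
  have huniv : (univ : Finset (Fin L → Fin k)).card = k ^ L := by
    rw [card_univ, Fintype.card_fun]
    simp
  have hkey : ((k : ℝ) - 1) / (k : ℝ) ^ 2 * (k : ℝ) ^ L
      ≤ ((univ.filter (fun v : Fin L → Fin k => ¬ (v j = z ↔ v j' = i))).card : ℝ) := by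
    have hc := card_le_card hsub
    have h3 : (((k - 1) * k ^ (L - 2) : ℕ) : ℝ) = ((k : ℝ) - 1) / (k : ℝ) ^ 2 * (k : ℝ) ^ L := by
      have h5 : ((k - 1 : ℕ) : ℝ) = (k : ℝ) - 1 := by
        rw [Nat.cast_sub (le_trans one_le_two hk)]
        simp
      rw [Nat.cast_mul, Nat.cast_pow, h5]
      rw [div_mul_eq_mul_div, eq_div_iff (by positivity)]
      rw [mul_assoc, ← pow_add]
      rw [Nat.sub_add_cancel hL]
    rw [← h3]
    exact_mod_cast le_trans hgcard hc
  have hsum : ((univ.filter (fun v : Fin L → Fin k => (v j = z ↔ v j' = i))).card : ℝ)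
      + ((univ.filter (fun v : Fin L → Fin k => ¬ (v j = z ↔ v j' = i))).card : ℝ)
      = (k : ℝ) ^ L := by
    rw [← Nat.cast_add, hsplit, huniv]
    push_cast
    ring
  nlinarith [hkey, hsum]


lemma auxNB (x y : ℝ) (hx : 2 ≤ x) (hy : 2 ≤ y) {d : ℕ} (hd : 2 ≤ d) :
    (y * x + 1) ^ (d - 1) + y * (y * x) ≤ (y * x + 1) ^ (d + 2) := by
  have hB : (2 : ℝ) ≤ y * x + 1 := by nlinarith
  have h1 : (y * x + 1) ^ (d - 1) ≤ (y * x + 1) ^ (d + 1) :=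
    pow_le_pow_right₀ (by linarith) (by omega)
  have e1 : y * (y * x) ≤ (y * x + 1) ^ 2 := by nlinarith
  have e2 : (y * x + 1) ^ 2 ≤ (y * x + 1) ^ (d + 1) :=
    pow_le_pow_right₀ (by linarith) (by omega)
  have h3 : (y * x + 1) ^ (d + 2) = (y * x + 1) * (y * x + 1) ^ (d + 1) := by ring
  nlinarith [pow_nonneg (by linarith : (0:ℝ) ≤ y * x + 1) (d + 1)]

lemma aux_logb_one_le {x : ℝ} (h : 2 ≤ x) : 1 ≤ Real.logb 2 x := by
  rw [Real.le_logb_iff_rpow_le (by norm_num) (by linarith)]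
  simpa using h

lemma aux_log_le_logb {x : ℝ} (hx : 1 ≤ x) : Real.log x ≤ Real.logb 2 x := by
  rw [Real.logb, le_div_iff₀ (Real.log_pos one_lt_two)]
  nlinarith [Real.log_nonneg hx, Real.log_two_lt_d9]

lemma aux_rpow (Ck : ℝ) (hCk : 2 ≤ Ck) (d : ℕ) (hd : 2 ≤ d) :
    (d : ℝ) * Ck ≤ (d : ℝ) ^ ((3 * Ck + 1) * Real.logb 2 (d : ℝ)) := by
  have hD2 : (2 : ℝ) ≤ (d : ℝ) := by exact_mod_cast hd
  have hd1 : (1 : ℝ) ≤ (d : ℝ) := by linarith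
  have hlogbd : 1 ≤ Real.logb 2 (d : ℝ) := aux_logb_one_le hD2
  have hc0 : (0 : ℝ) ≤ 3 * Ck + 1 := by linarith
  have step1 : (d : ℝ) ^ ((3 * Ck + 1) : ℝ) ≤ (d : ℝ) ^ ((3 * Ck + 1) * Real.logb 2 (d : ℝ)) :=
    Real.rpow_le_rpow_of_exponent_le hd1 (le_mul_of_one_le_right hc0 hlogbd)
  have step2 : (d : ℝ) * Ck ≤ (d : ℝ) ^ ((3 * Ck + 1) : ℝ) := by
    have e1 : (d : ℝ) ^ ((3 * Ck + 1) : ℝ) = (d : ℝ) * (d : ℝ) ^ ((3 * Ck) : ℝ) := by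
      rw [show (3 * Ck + 1 : ℝ) = 1 + 3 * Ck by ring, Real.rpow_add (by linarith), Real.rpow_one]
    have e2 : (2 : ℝ) ^ ((3 * Ck) : ℝ) ≤ (d : ℝ) ^ ((3 * Ck) : ℝ) :=
      Real.rpow_le_rpow (by norm_num) hD2 (by linarith)
    have e3 : Ck ≤ (2 : ℝ) ^ ((3 * Ck) : ℝ) := by
      rw [Real.rpow_def_of_pos (by norm_num : (0:ℝ) < 2)]
      nlinarith [Real.add_one_le_exp (Real.log 2 * (3 * Ck)), Real.log_two_gt_d9]
    rw [e1]
    have : Ck ≤ (d : ℝ) ^ ((3 * Ck) : ℝ) := le_trans e3 e2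
    nlinarith
  exact le_trans step2 step1

lemma aux_mulpow (K : ℝ) (hK : 2 ≤ K) (d : ℕ) :
    ((K - 1) / K) ^ d * (K / (K - 1)) ^ d = 1 := by
  rw [← mul_pow, div_mul_div_comm, mul_comm (K - 1) K,
    div_self (by nlinarith : K * (K - 1) ≠ 0), one_pow]


end PartSysAux


set_option maxHeartbeats 2000000 in
/-- For every integer `k ≥ 2` there exists a constant `c_k > 0` such that
for all integers `d ≥ 2` and `L ≥ 2` there exists a partition system `β(m, L, k, d)` —
`L` distinct partitions of a universe of size `m`, each into `k` pairwise disjoint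
parts covering the universe, such that any cover of the universe using no two parts
from the same partition has at least `d` parts — whose universe size satisfies
`m ≤ (k/(k−1))^d · d^(c_k·log₂ d) · log₂ L`. -/
theorem partition_system_exists_deterministic :
    ∀ k : ℕ, 2 ≤ k →
      ∃ c : ℝ, 0 < c ∧
        ∀ d L : ℕ, 2 ≤ d → 2 ≤ L →
          ∃ (m : ℕ) (P : Fin L → Fin k → Finset (Fin m)),
            (∀ j, ∀ i i' : Fin k, i ≠ i' → Disjoint (P j i) (P j i')) ∧
            (∀ j, Finset.univ.biUnion (P j) = Finset.univ) ∧
            Function.Injective (fun j => Finset.univ.image (P j)) ∧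
            (∀ S : Finset (Fin L × Fin k),
              (∀ x ∈ S, ∀ y ∈ S, x.1 = y.1 → x = y) →
              S.biUnion (fun p => P p.1 p.2) = Finset.univ →
              d ≤ S.card) ∧
            (m : ℝ) ≤ ((k : ℝ) / ((k : ℝ) - 1)) ^ d * (d : ℝ) ^ (c * Real.logb 2 d) *
              Real.logb 2 L := by
  intro k hk
  classical
  have hK2 : (2 : ℝ) ≤ (k : ℝ) := by exact_mod_cast hk
  have hK0 : (0 : ℝ) < (k : ℝ) := by linarith
  have hK1 : (0 : ℝ) < (k : ℝ) - 1 := by linarith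
  obtain ⟨K, hKdef⟩ : ∃ K : ℝ, K = (k : ℝ) := ⟨_, rfl⟩
  rw [← hKdef] at hK2 hK0 hK1
  obtain ⟨Ck, hCkdef⟩ : ∃ Ck : ℝ, Ck = 2 * K * (Real.log (2 * K) + 1) + 2 := ⟨_, rfl⟩
  have hlog2K : 0 ≤ Real.log (2 * K) := Real.log_nonneg (by linarith)
  have hCk2 : 2 ≤ Ck := by rw [hCkdef]; nlinarith
  refine ⟨3 * Ck + 1, by linarith, ?_⟩
  intro d L hd hL
  have hd1 : 1 ≤ d := by omega
  have hD2 : (2 : ℝ) ≤ (d : ℝ) := by exact_mod_cast hd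
  have hL2 : (2 : ℝ) ≤ (L : ℝ) := by exact_mod_cast hL
  -- basic quantities
  have hbase0 : (0 : ℝ) ≤ (K - 1) / K := by positivity
  have hbase1 : (K - 1) / K ≤ 1 := by rw [div_le_one hK0]; linarith
  have hbasepos : (0 : ℝ) < (K - 1) / K := by positivity
  obtain ⟨ε, hεdef⟩ : ∃ ε : ℝ, ε = ((K - 1) / K) ^ d / K := ⟨_, rfl⟩
  have hεpos : 0 < ε := by rw [hεdef]; positivity
  have hεle_q : ε ≤ ((K - 1) / K) ^ (d - 1) := by
    calc ε ≤ ((K - 1) / K) ^ d := by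
          rw [hεdef]
          exact div_le_self (by positivity) (by linarith)
      _ ≤ ((K - 1) / K) ^ (d - 1) := pow_le_pow_of_le_one hbase0 hbase1 (by omega)
  have hεle2 : ε ≤ (K - 1) / K ^ 2 := by
    have h1 : ((K - 1) / K) ^ d ≤ ((K - 1) / K) ^ 1 :=
      pow_le_pow_of_le_one hbase0 hbase1 hd1
    rw [hεdef]
    rw [pow_one] at h1
    calc ((K - 1) / K) ^ d / K ≤ ((K - 1) / K) / K := by gcongr
      _ = (K - 1) / K ^ 2 := by ring
  have hεlt1 : ε < 1 := by
    have : (K - 1) / K ^ 2 < 1 := by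
      rw [div_lt_one (by positivity)]
      nlinarith
    linarith
  -- choice of m
  obtain ⟨A, hAdef⟩ : ∃ A : ℝ, A = ((d : ℝ) + 2) * Real.log ((L : ℝ) * K + 1) := ⟨_, rfl⟩
  have hlogLK : 0 ≤ Real.log ((L : ℝ) * K + 1) := Real.log_nonneg (by nlinarith)
  have hAnonneg : 0 ≤ ((d : ℝ) + 2) * Real.log ((L : ℝ) * K + 1) := by positivity
  have hA0 : 0 ≤ A := by rw [hAdef]; positivity
  obtain ⟨m, hmdef⟩ : ∃ m : ℕ, m = ⌈A / ε⌉₊ + 1 := ⟨_, rfl⟩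
  have hm1 : 1 ≤ m := by omega
  have hmR : (m : ℝ) ≤ A / ε + 2 := by
    have h := Nat.ceil_lt_add_one (by positivity : (0:ℝ) ≤ A / ε)
    rw [hmdef]
    push_cast
    linarith
  have hmA : A + ε ≤ ε * m := by
    have h := Nat.le_ceil (A / ε)
    have h2 : (A / ε + 1) * ε ≤ (m : ℝ) * ε := by
      apply mul_le_mul_of_nonneg_right _ (le_of_lt hεpos)
      rw [hmdef]; push_cast; linarith
    rw [div_add' _ _ _ (ne_of_gt hεpos), div_mul_cancel₀ _ (ne_of_gt hεpos)] at h2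
    linarith [h2, mul_comm (m : ℝ) ε]
  -- the number of events
  obtain ⟨N, hNdef⟩ : ∃ N : ℕ, N = (L * k + 1) ^ (d - 1) + L * (L * k) := ⟨_, rfl⟩
  have hN1 : 1 ≤ N := by
    have h := Nat.one_le_pow (d - 1) (L * k + 1) (by omega)
    omega
  obtain ⟨B, hBdef⟩ : ∃ B : ℝ, B = (L : ℝ) * K + 1 := ⟨_, rfl⟩
  have hB2 : (2 : ℝ) ≤ B := by nlinarith
  have hNB : (N : ℝ) ≤ B ^ (d + 2) := by
    have hcast : (N : ℝ) = ((L : ℝ) * K + 1) ^ (d - 1) + (L : ℝ) * ((L : ℝ) * K) := by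
      rw [hNdef, hKdef]; push_cast; ring
    rw [hcast, hBdef]
    exact PartSysAux.auxNB K (L : ℝ) hK2 hL2 hd
  have hNlog : Real.log N ≤ A := by
    calc Real.log N ≤ Real.log (B ^ (d + 2)) := by
          apply Real.log_le_log (by exact_mod_cast hN1) hNB
      _ = ((d : ℝ) + 2) * Real.log B := by
          rw [Real.log_pow]; push_cast; ring
      _ = A := by rw [hAdef, hBdef]
  -- key inequality
  have hkey : (N : ℝ) * (1 - ε) ^ m < 1 := by
    have hexp : (1 - ε) ^ m ≤ Real.exp (-(ε * m)) := by
      calc (1 - ε) ^ m ≤ Real.exp (-ε) ^ m := by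
            apply pow_le_pow_left₀ (by linarith)
            linarith [Real.add_one_le_exp (-ε)]
        _ = Real.exp (-(ε * m)) := by
            rw [← Real.exp_nat_mul]
            ring_nf
    have hN0 : (0 : ℝ) < N := by exact_mod_cast hN1
    calc (N : ℝ) * (1 - ε) ^ m ≤ (N : ℝ) * Real.exp (-(ε * m)) := by
          apply mul_le_mul_of_nonneg_left hexp (le_of_lt hN0)
      _ = Real.exp (Real.log N - ε * m) := by
          rw [Real.exp_sub, Real.exp_log hN0, div_eq_mul_inv, ← Real.exp_neg]
      _ < 1 := by
          apply Real.exp_lt_one_iff.mpr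
          linarith [hmA, hNlog]
  -- the probabilistic construction
  have hkpos : 0 < k := by omega
  have z : Fin k := ⟨0, by omega⟩
  obtain ⟨M, hM1, hM2⟩ : ∃ M : Fin m → Fin L → Fin k,
      (∀ S : Finset (Fin L × Fin k), S.card ≤ d - 1 →
        (∀ x ∈ S, ∀ y ∈ S, x.1 = y.1 → x = y) → ∃ x, ∀ p ∈ S, M x p.1 ≠ p.2) ∧
      (∀ j j' : Fin L, j ≠ j' → ∀ i : Fin k, ∃ x, ¬ (M x j = z ↔ M x j' = i)) := by
    set Bad : Finset (Fin m → Fin L → Fin k) := univ.filter (fun M =>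
      ¬ ((∀ S : Finset (Fin L × Fin k), S.card ≤ d - 1 →
        (∀ x ∈ S, ∀ y ∈ S, x.1 = y.1 → x = y) → ∃ x, ∀ p ∈ S, M x p.1 ≠ p.2) ∧
      (∀ j j' : Fin L, j ≠ j' → ∀ i : Fin k, ∃ x, ¬ (M x j = z ↔ M x j' = i)))) with hBad
    set 𝒮 : Finset (Finset (Fin L × Fin k)) := univ.filter (fun S =>
      S.card ≤ d - 1 ∧ ∀ x ∈ S, ∀ y ∈ S, x.1 = y.1 → x = y) with h𝒮
    set bF : Finset (Fin L × Fin k) → Finset (Fin m → Fin L → Fin k) := fun S =>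
      univ.filter (fun M => ∀ x, ∃ p ∈ S, M x p.1 = p.2) with hbF
    set E2 : Finset (Fin L × Fin L × Fin k) :=
      univ.filter (fun w => w.1 ≠ w.2.1) with hE2
    set bF2 : Fin L × Fin L × Fin k → Finset (Fin m → Fin L → Fin k) := fun w =>
      univ.filter (fun M => ∀ x, (M x w.1 = z ↔ M x w.2.1 = w.2.2)) with hbF2
    have hsub : Bad ⊆ 𝒮.biUnion bF ∪ E2.biUnion bF2 := by
      intro M hM
      rw [hBad, mem_filter] at hM
      rcases not_and_or.mp hM.2 with h | h
      · push_neg at h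
        obtain ⟨S, hS1, hS2, hS3⟩ := h
        exact mem_union_left _ (mem_biUnion.mpr ⟨S, mem_filter.mpr ⟨mem_univ _, hS1, hS2⟩,
          mem_filter.mpr ⟨mem_univ _, hS3⟩⟩)
      · push_neg at h
        obtain ⟨j, j', hjj, i, hii⟩ := h
        exact mem_union_right _ (mem_biUnion.mpr ⟨(j, j', i),
          mem_filter.mpr ⟨mem_univ _, hjj⟩, mem_filter.mpr ⟨mem_univ _, hii⟩⟩)
    have h1ε : (0:ℝ) ≤ 1 - ε := by linarith
    have hKL0 : (0:ℝ) ≤ (1 - ε) * K ^ L := mul_nonneg h1ε (by positivity)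
    have hcard1 : ∀ S ∈ 𝒮, ((bF S).card : ℝ) ≤ ((1 - ε) * K ^ L) ^ m := by
      intro S hS
      rw [h𝒮, mem_filter] at hS
      obtain ⟨-, hSc, hSr⟩ := hS
      have h1 : (bF S).card ≤
          (univ.filter (fun v : Fin L → Fin k => ¬ ∀ p ∈ S, v p.1 ≠ p.2)).card ^ m := by
        apply PartSysAux.card_matrix_le
        intro M hM x
        rw [mem_filter]
        refine ⟨mem_univ _, fun hall => ?_⟩
        obtain ⟨p, hp, he⟩ := hM x
        exact hall p hp he
      have h2 := PartSysAux.rows1 hk (d - 1) S hSr hSc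
      rw [← hKdef] at h2
      calc ((bF S).card : ℝ)
          ≤ (((univ.filter (fun v : Fin L → Fin k => ¬ ∀ p ∈ S, v p.1 ≠ p.2)).card : ℝ)) ^ m := by
            exact_mod_cast h1
        _ ≤ ((1 - ε) * K ^ L) ^ m := by
            apply pow_le_pow_left₀ (Nat.cast_nonneg _)
            refine le_trans h2 ?_
            apply mul_le_mul_of_nonneg_right _ (by positivity)
            linarith [hεle_q]
    have hcard2 : ∀ w ∈ E2, ((bF2 w).card : ℝ) ≤ ((1 - ε) * K ^ L) ^ m := by
      intro w hw
      rw [hE2, mem_filter] at hw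
      have h1 : (bF2 w).card ≤
          (univ.filter (fun v : Fin L → Fin k => (v w.1 = z ↔ v w.2.1 = w.2.2))).card ^ m := by
        apply PartSysAux.card_matrix_le
        intro M hM x
        rw [mem_filter]
        exact ⟨mem_univ _, hM x⟩
      have h2 := PartSysAux.rows2 hk hL hw.2 z w.2.2
      rw [← hKdef] at h2
      calc ((bF2 w).card : ℝ)
          ≤ (((univ.filter (fun v : Fin L → Fin k => (v w.1 = z ↔ v w.2.1 = w.2.2))).card : ℝ)) ^ m := by
            exact_mod_cast h1
        _ ≤ ((1 - ε) * K ^ L) ^ m := by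
            apply pow_le_pow_left₀ (Nat.cast_nonneg _)
            refine le_trans h2 ?_
            apply mul_le_mul_of_nonneg_right _ (by positivity)
            linarith [hεle2]
    have hScard : (𝒮.card : ℝ) ≤ (((L * k + 1) ^ (d - 1) : ℕ) : ℝ) := by
      have hsub2 : 𝒮 ⊆ univ.filter (fun S : Finset (Fin L × Fin k) => S.card ≤ d - 1) := by
        intro S hS
        rw [h𝒮, mem_filter] at hS
        exact mem_filter.mpr ⟨mem_univ _, hS.2.1⟩
      have := le_trans (card_le_card hsub2) (PartSysAux.card_small_le (d - 1))
      have hcX : Fintype.card (Fin L × Fin k) = L * k := by simp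
      rw [hcX] at this
      exact_mod_cast this
    have hE2card : (E2.card : ℝ) ≤ ((L * (L * k) : ℕ) : ℝ) := by
      have : E2.card ≤ L * (L * k) := by
        calc E2.card ≤ (univ : Finset (Fin L × Fin L × Fin k)).card := card_filter_le _ _
          _ = L * (L * k) := by
              rw [card_univ]
              simp [Fintype.card_prod]
      exact_mod_cast this
    have hBadle : (Bad.card : ℝ) ≤ (N : ℝ) * ((1 - ε) * K ^ L) ^ m := by
      have hu := card_le_card hsub
      have hunion := card_union_le (𝒮.biUnion bF) (E2.biUnion bF2)
      have hb1 := card_biUnion_le (s := 𝒮) (t := bF)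
      have hb2 := card_biUnion_le (s := E2) (t := bF2)
      have hsum1 : (∑ S ∈ 𝒮, ((bF S).card : ℝ)) ≤ (𝒮.card : ℝ) * ((1 - ε) * K ^ L) ^ m := by
        have := Finset.sum_le_card_nsmul 𝒮 _ (((1 - ε) * K ^ L) ^ m) hcard1
        simpa [nsmul_eq_mul] using this
      have hsum2 : (∑ w ∈ E2, ((bF2 w).card : ℝ)) ≤ (E2.card : ℝ) * ((1 - ε) * K ^ L) ^ m := by
        have := Finset.sum_le_card_nsmul E2 _ (((1 - ε) * K ^ L) ^ m) hcard2
        simpa [nsmul_eq_mul] using this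
      have hNge : (𝒮.card : ℝ) + (E2.card : ℝ) ≤ (N : ℝ) := by
        have : (((L * k + 1) ^ (d - 1) : ℕ) : ℝ) + ((L * (L * k) : ℕ) : ℝ) = (N : ℝ) := by
          rw [hNdef]; push_cast; ring
        linarith [hScard, hE2card]
      have hpow0 : (0:ℝ) ≤ ((1 - ε) * K ^ L) ^ m := pow_nonneg hKL0 m
      calc (Bad.card : ℝ) ≤ (((𝒮.biUnion bF ∪ E2.biUnion bF2).card : ℕ) : ℝ) := by
            exact_mod_cast hu
        _ ≤ ((𝒮.biUnion bF).card : ℝ) + ((E2.biUnion bF2).card : ℝ) := by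
            exact_mod_cast hunion
        _ ≤ (∑ S ∈ 𝒮, ((bF S).card : ℝ)) + (∑ w ∈ E2, ((bF2 w).card : ℝ)) := by
            refine add_le_add ?_ ?_
            · exact_mod_cast hb1
            · exact_mod_cast hb2
        _ ≤ (𝒮.card : ℝ) * ((1 - ε) * K ^ L) ^ m + (E2.card : ℝ) * ((1 - ε) * K ^ L) ^ m :=
            add_le_add hsum1 hsum2
        _ = ((𝒮.card : ℝ) + (E2.card : ℝ)) * ((1 - ε) * K ^ L) ^ m := by ring
        _ ≤ (N : ℝ) * ((1 - ε) * K ^ L) ^ m := mul_le_mul_of_nonneg_right hNge hpow0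
    have huniv : (((univ : Finset (Fin m → Fin L → Fin k)).card : ℕ) : ℝ) = (K ^ L) ^ m := by
      rw [card_univ, hKdef]
      simp only [Fintype.card_fun, Fintype.card_fin]
      push_cast
      ring
    have hlt : (Bad.card : ℝ) < (((univ : Finset (Fin m → Fin L → Fin k)).card : ℕ) : ℝ) := by
      rw [huniv]
      calc (Bad.card : ℝ) ≤ (N : ℝ) * ((1 - ε) * K ^ L) ^ m := hBadle
        _ = ((N : ℝ) * (1 - ε) ^ m) * (K ^ L) ^ m := by rw [mul_pow]; ring
        _ < 1 * (K ^ L) ^ m := by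
            apply mul_lt_mul_of_pos_right hkey
            positivity
        _ = (K ^ L) ^ m := one_mul _
    have hnotsub : ¬ (univ : Finset (Fin m → Fin L → Fin k)) ⊆ Bad := by
      intro hs
      have := card_le_card hs
      have hltn : Bad.card < (univ : Finset (Fin m → Fin L → Fin k)).card := by exact_mod_cast hlt
      omega
    obtain ⟨M, hMu, hMB⟩ := not_subset.mp hnotsub
    refine ⟨M, ?_⟩
    by_contra hng
    exact hMB (mem_filter.mpr ⟨mem_univ M, hng⟩)
  -- the partition system
  refine ⟨m, fun j i => univ.filter (fun x : Fin m => M x j = i), ?_, ?_, ?_, ?_, ?_⟩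
  · intro j i i' hne
    rw [Finset.disjoint_left]
    intro x hx hx'
    rw [mem_filter] at hx hx'
    exact hne (hx.2.symm.trans hx'.2)
  · intro j
    ext x
    simp only [mem_biUnion, mem_filter, mem_univ, true_and, iff_true]
    exact ⟨M x j, rfl⟩
  · intro j j' h
    by_contra hne
    simp only at h
    have hz : univ.filter (fun x : Fin m => M x j = z) ∈
        univ.image (fun i => univ.filter (fun x : Fin m => M x j' = i)) := by
      rw [← h]
      exact mem_image_of_mem _ (mem_univ z)
    obtain ⟨i, -, hPi⟩ := mem_image.mp hz
    obtain ⟨x, hx⟩ := hM2 j j' hne i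
    apply hx
    have hxx := Finset.ext_iff.mp hPi x
    simp only [mem_filter, mem_univ, true_and] at hxx
    exact hxx.symm
  · intro S hrain hcov
    by_contra hlt
    push_neg at hlt
    have hSc : S.card ≤ d - 1 := by omega
    obtain ⟨x, hx⟩ := hM1 S hSc hrain
    have hxx : x ∈ S.biUnion (fun p => univ.filter (fun y : Fin m => M y p.1 = p.2)) := by
      rw [hcov]; exact mem_univ x
    obtain ⟨p, hp, hxp⟩ := mem_biUnion.mp hxx
    rw [mem_filter] at hxp
    exact hx p hp hxp.2
  · -- the size bound
    rw [← hKdef]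
    have hG1 : (1:ℝ) ≤ (K / (K - 1)) ^ d :=
      one_le_pow₀ ((one_le_div hK1).mpr (by linarith))
    have hpd : ((K - 1) / K) ^ d ≠ 0 := pow_ne_zero d (ne_of_gt hbasepos)
    have hAeq : A / ε = A * K * (K / (K - 1)) ^ d := by
      rw [hεdef, div_div_eq_mul_div, div_eq_iff hpd]
      calc A * K = A * K * (((K - 1) / K) ^ d * (K / (K - 1)) ^ d) := by
            rw [PartSysAux.aux_mulpow K hK2 d]; ring
        _ = A * K * (K / (K - 1)) ^ d * ((K - 1) / K) ^ d := by ring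
    have hm2 : (m : ℝ) ≤ A * K * (K / (K - 1)) ^ d + 2 := by rw [← hAeq]; exact hmR
    have hstep : A * K * (K / (K - 1)) ^ d + 2 ≤ (K / (K - 1)) ^ d * (K * A + 2) := by
      nlinarith [hG1, mul_nonneg hA0 (le_of_lt hK0)]
    have hlogb1L : 1 ≤ Real.logb 2 (L : ℝ) := PartSysAux.aux_logb_one_le hL2
    have hlog1 : Real.log ((L : ℝ) * K + 1) ≤ (Real.log (2 * K) + 1) * Real.logb 2 (L : ℝ) := by
      have s1 : Real.log ((L : ℝ) * K + 1) ≤ Real.log (2 * K * (L : ℝ)) :=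
        Real.log_le_log (by positivity) (by nlinarith)
      have s2 : Real.log (2 * K * (L : ℝ)) = Real.log (2 * K) + Real.log (L : ℝ) :=
        Real.log_mul (by positivity) (by positivity)
      have s3 : Real.log (L : ℝ) ≤ Real.logb 2 (L : ℝ) :=
        PartSysAux.aux_log_le_logb (by linarith)
      have s4 : Real.log (2 * K) ≤ Real.log (2 * K) * Real.logb 2 (L : ℝ) :=
        le_mul_of_one_le_right hlog2K hlogb1L
      nlinarith [s1, s2, s3, s4]
    have hinner : K * A + 2 ≤
        (d : ℝ) ^ ((3 * Ck + 1) * Real.logb 2 (d : ℝ)) * Real.logb 2 (L : ℝ) := by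
      have hX0 : (0:ℝ) ≤ K * ((d : ℝ) + 2) := by positivity
      have t1 : K * A + 2 ≤
          K * ((d : ℝ) + 2) * ((Real.log (2 * K) + 1) * Real.logb 2 (L : ℝ)) + 2 := by
        rw [hAdef]
        have := mul_le_mul_of_nonneg_left hlog1 hX0
        nlinarith [this]
      have u1 : K * ((d : ℝ) + 2) * (Real.log (2 * K) + 1) + 2 ≤ (d : ℝ) * Ck := by
        rw [hCkdef]
        nlinarith [hlog2K, hD2, hK2]
      have v2 : K * ((d : ℝ) + 2) * ((Real.log (2 * K) + 1) * Real.logb 2 (L : ℝ)) + 2 ≤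
          (K * ((d : ℝ) + 2) * (Real.log (2 * K) + 1) + 2) * Real.logb 2 (L : ℝ) := by
        nlinarith [hlogb1L, mul_nonneg hX0 hlog2K, hX0]
      have v1 : (K * ((d : ℝ) + 2) * (Real.log (2 * K) + 1) + 2) * Real.logb 2 (L : ℝ) ≤
          ((d : ℝ) * Ck) * Real.logb 2 (L : ℝ) :=
        mul_le_mul_of_nonneg_right u1 (by linarith)
      have t3 : ((d : ℝ) * Ck) * Real.logb 2 (L : ℝ) ≤
          (d : ℝ) ^ ((3 * Ck + 1) * Real.logb 2 (d : ℝ)) * Real.logb 2 (L : ℝ) :=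
        mul_le_mul_of_nonneg_right (PartSysAux.aux_rpow Ck hCk2 d hd) (by linarith)
      linarith [t1, v2, v1, t3]
    calc (m : ℝ) ≤ A * K * (K / (K - 1)) ^ d + 2 := hm2
      _ ≤ (K / (K - 1)) ^ d * (K * A + 2) := hstep
      _ ≤ (K / (K - 1)) ^ d *
          ((d : ℝ) ^ ((3 * Ck + 1) * Real.logb 2 (d : ℝ)) * Real.logb 2 (L : ℝ)) :=
          mul_le_mul_of_nonneg_left hinner (by positivity)
      _ = (K / (K - 1)) ^ d * (d : ℝ) ^ ((3 * Ck + 1) * Real.logb 2 (d : ℝ)) *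
          Real.logb 2 (L : ℝ) := by ring
end

section
/- Let ℓ ≥ 1 be an integer and 0 < ε < 1. Every projection game with agreement soundness error ε has list-agreement soundness error (ℓ, ε·ℓ²); that is, if for every labeling φ_A : A → Σ_A the vertices of A totally disagree on at least a (1 − ε) fraction of the vertices of B, then for every ℓ-labeling φ̂_A : A → {subsets of Σ_A of size ℓ} the vertices of A totally list-disagree on at least a (1 − ε·ℓ²) fraction of the vertices of B. -/
/-- Let `ℓ ≥ 1` and `0 < ε < 1`.  Every projection game with agreement
soundness error `ε` has list-agreement soundness error `(ℓ, ε·ℓ²)`: if for every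
labeling `φ : A → Σ_A` the vertices of `A` totally disagree on at least a `(1 − ε)`
fraction of the vertices of `B`, then for every `ℓ`-labeling
`φL : A → {subsets of Σ_A of size ℓ}` the vertices of `A` totally list-disagree on at
least a `(1 − ε·ℓ²)` fraction of the vertices of `B`. -/
theorem agreement_to_list_agreement
    {A B SA SB : Type} [Fintype A] [DecidableEq A] [Fintype B] [DecidableEq B]
    [Fintype SA] [DecidableEq SA] [DecidableEq SB]
    (E : Finset (A × B)) (π : A × B → SA → SB)
    (ℓ : ℕ) (hℓ : 1 ≤ ℓ) (ε : ℝ) (hε0 : 0 < ε) (hε1 : ε < 1)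
    (hagree : ∀ φ : A → SA,
      (1 - ε) * (Fintype.card B : ℝ) ≤
        ((Finset.univ.filter (fun b : B =>
          ∀ a₁ a₂ : A, (a₁, b) ∈ E → (a₂, b) ∈ E → a₁ ≠ a₂ →
            π (a₁, b) (φ a₁) ≠ π (a₂, b) (φ a₂))).card : ℝ)) :
    ∀ φL : A → Finset SA, (∀ a, (φL a).card = ℓ) →
      (1 - ε * (ℓ : ℝ) ^ 2) * (Fintype.card B : ℝ) ≤
        ((Finset.univ.filter (fun b : B =>
          ∀ a₁ a₂ : A, (a₁, b) ∈ E → (a₂, b) ∈ E → a₁ ≠ a₂ →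
            ∀ σ₁ ∈ φL a₁, ∀ σ₂ ∈ φL a₂,
              π (a₁, b) σ₁ ≠ π (a₂, b) σ₂)).card : ℝ) := by
  classical
  intro φL hφL
  set n := Fintype.card A with hn
  set Badφ : (A → SA) → Finset B := fun φ => Finset.univ.filter (fun b : B =>
      ¬ ∀ a₁ a₂ : A, (a₁, b) ∈ E → (a₂, b) ∈ E → a₁ ≠ a₂ →
        π (a₁, b) (φ a₁) ≠ π (a₂, b) (φ a₂)) with hBadφ
  set BadL : Finset B := Finset.univ.filter (fun b : B =>
      ¬ ∀ a₁ a₂ : A, (a₁, b) ∈ E → (a₂, b) ∈ E → a₁ ≠ a₂ →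
        ∀ σ₁ ∈ φL a₁, ∀ σ₂ ∈ φL a₂, π (a₁, b) σ₁ ≠ π (a₂, b) σ₂) with hBadLdef
  -- goal reduces to bounding BadL.card
  have hsplitL := Finset.card_filter_add_card_filter_not
    (s := (Finset.univ : Finset B))
    (p := fun b : B => ∀ a₁ a₂ : A, (a₁, b) ∈ E → (a₂, b) ∈ E → a₁ ≠ a₂ →
        ∀ σ₁ ∈ φL a₁, ∀ σ₂ ∈ φL a₂, π (a₁, b) σ₁ ≠ π (a₂, b) σ₂)
  rw [Finset.card_univ] at hsplitL
  suffices hmain : (BadL.card : ℝ) ≤ ε * (ℓ : ℝ) ^ 2 * Fintype.card B by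
    have := hsplitL
    have hcast : ((Finset.univ.filter (fun b : B =>
        ∀ a₁ a₂ : A, (a₁, b) ∈ E → (a₂, b) ∈ E → a₁ ≠ a₂ →
          ∀ σ₁ ∈ φL a₁, ∀ σ₂ ∈ φL a₂, π (a₁, b) σ₁ ≠ π (a₂, b) σ₂)).card : ℝ)
        + (BadL.card : ℝ) = Fintype.card B := by
      rw [hBadLdef]; exact_mod_cast this
    nlinarith [hcast]
  -- per-labeling bound on bad set
  have hbadφ : ∀ φ : A → SA, ((Badφ φ).card : ℝ) ≤ ε * Fintype.card B := by
    intro φ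
    have h := hagree φ
    have hsplit := Finset.card_filter_add_card_filter_not
      (s := (Finset.univ : Finset B))
      (p := fun b : B => ∀ a₁ a₂ : A, (a₁, b) ∈ E → (a₂, b) ∈ E → a₁ ≠ a₂ →
          π (a₁, b) (φ a₁) ≠ π (a₂, b) (φ a₂))
    rw [Finset.card_univ] at hsplit
    have hcast : ((Finset.univ.filter (fun b : B =>
        ∀ a₁ a₂ : A, (a₁, b) ∈ E → (a₂, b) ∈ E → a₁ ≠ a₂ →
          π (a₁, b) (φ a₁) ≠ π (a₂, b) (φ a₂))).card : ℝ)
        + ((Badφ φ).card : ℝ) = Fintype.card B := by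
      rw [hBadφ]; exact_mod_cast hsplit
    nlinarith [hcast]
  rcases BadL.eq_empty_or_nonempty with hBe | hBne
  · rw [hBe]
    simp only [Finset.card_empty, Nat.cast_zero]
    positivity
  -- nonempty case: get n ≥ 2
  obtain ⟨b₀, hb₀⟩ := hBne
  have hb₀' := (Finset.mem_filter.mp hb₀).2
  push_neg at hb₀'
  obtain ⟨a₁', a₂', _, _, hne', _⟩ := hb₀'
  have hn2 : 2 ≤ n := by
    have : ({a₁', a₂'} : Finset A).card = 2 := Finset.card_pair hne'
    calc 2 = ({a₁', a₂'} : Finset A).card := this.symm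
    _ ≤ (Finset.univ : Finset A).card := Finset.card_le_card (Finset.subset_univ _)
    _ = n := Finset.card_univ
  set P : Finset (A → SA) := Fintype.piFinset φL with hP
  have hPcard : P.card = ℓ ^ n := by
    rw [hP, Fintype.card_piFinset]
    simp only [hφL]
    rw [Finset.prod_const, Finset.card_univ]
  -- key pointwise bound
  have hkey : ∀ b ∈ BadL, ℓ ^ (n - 2) ≤ (P.filter (fun φ => b ∈ Badφ φ)).card := by
    intro b hb
    have hb' := (Finset.mem_filter.mp hb).2
    push_neg at hb'
    obtain ⟨a₁, a₂, he₁, he₂, hne, σ₁, hσ₁, σ₂, hσ₂, heq⟩ := hb'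
    set φL' : A → Finset SA := fun a =>
      if a = a₁ then {σ₁} else if a = a₂ then {σ₂} else φL a with hφL'
    have hsub : Fintype.piFinset φL' ⊆ P.filter (fun φ => b ∈ Badφ φ) := by
      intro φ hφ
      rw [Fintype.mem_piFinset] at hφ
      have hφa₁ : φ a₁ = σ₁ := by
        have := hφ a₁
        simp [hφL'] at this
        exact this
      have hφa₂ : φ a₂ = σ₂ := by
        have := hφ a₂
        simp [hφL', hne.symm] at this
        exact this
      refine Finset.mem_filter.mpr ⟨?_, ?_⟩
      · rw [hP, Fintype.mem_piFinset]
        intro a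
        have := hφ a
        by_cases h1 : a = a₁
        · subst h1; rw [hφa₁]; exact hσ₁
        · by_cases h2 : a = a₂
          · subst h2; rw [hφa₂]; exact hσ₂
          · simpa [hφL', h1, h2] using this
      · rw [hBadφ]
        refine Finset.mem_filter.mpr ⟨Finset.mem_univ _, ?_⟩
        push_neg
        exact ⟨a₁, a₂, he₁, he₂, hne, by rw [hφa₁, hφa₂]; exact heq⟩
    calc ℓ ^ (n - 2) = (Fintype.piFinset φL').card := by
          rw [Fintype.card_piFinset]
          have hsplit : ∀ S : Finset A, S = {a₁, a₂} →
              ∏ a, (φL' a).card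
              = (∏ a ∈ Finset.univ \ S, (φL' a).card) * ∏ a ∈ S, (φL' a).card := by
            intro S hS
            rw [Finset.prod_sdiff (Finset.subset_univ S)]
          rw [hsplit {a₁, a₂} rfl]
          have h2 : ∏ a ∈ ({a₁, a₂} : Finset A), (φL' a).card = 1 := by
            rw [Finset.prod_pair hne]
            simp [hφL', hne.symm]
          have h1 : ∏ a ∈ Finset.univ \ ({a₁, a₂} : Finset A), (φL' a).card
              = ℓ ^ (n - 2) := by
            rw [Finset.prod_congr rfl (fun a ha => ?_), Finset.prod_const]
            · congr 1
              rw [Finset.card_sdiff_of_subset (Finset.subset_univ _), Finset.card_univ,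
                Finset.card_pair hne]
            · rw [Finset.mem_sdiff, Finset.mem_insert, Finset.mem_singleton] at ha
              push_neg at ha
              simp [hφL', ha.2.1, ha.2.2, hφL a]
          rw [h1, h2, mul_one]
      _ ≤ (P.filter (fun φ => b ∈ Badφ φ)).card := Finset.card_le_card hsub
  -- double counting
  have hdc : BadL.card * ℓ ^ (n - 2) ≤ ∑ φ ∈ P, (Badφ φ).card := by
    calc BadL.card * ℓ ^ (n - 2) = ∑ _b ∈ BadL, ℓ ^ (n - 2) := by
          rw [Finset.sum_const, smul_eq_mul]
      _ ≤ ∑ b ∈ BadL, (P.filter (fun φ => b ∈ Badφ φ)).card :=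
          Finset.sum_le_sum hkey
      _ = ∑ b ∈ BadL, ∑ φ ∈ P, (if b ∈ Badφ φ then 1 else 0) := by
          refine Finset.sum_congr rfl (fun b _ => ?_)
          rw [Finset.card_filter]
      _ = ∑ φ ∈ P, ∑ b ∈ BadL, (if b ∈ Badφ φ then 1 else 0) := Finset.sum_comm
      _ = ∑ φ ∈ P, (BadL.filter (fun b => b ∈ Badφ φ)).card := by
          refine Finset.sum_congr rfl (fun φ _ => ?_)
          rw [Finset.card_filter]
      _ ≤ ∑ φ ∈ P, (Badφ φ).card := by
          refine Finset.sum_le_sum (fun φ _ => ?_)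
          exact Finset.card_le_card (fun b hb => (Finset.mem_filter.mp hb).2)
  -- pass to reals
  have hreal : (BadL.card : ℝ) * (ℓ : ℝ) ^ (n - 2) ≤ (ℓ : ℝ) ^ n * (ε * Fintype.card B) := by
    have h1 : ((BadL.card * ℓ ^ (n - 2) : ℕ) : ℝ) ≤ ((∑ φ ∈ P, (Badφ φ).card : ℕ) : ℝ) := by
      exact_mod_cast hdc
    push_cast at h1
    have h2 : ((∑ φ ∈ P, (Badφ φ).card : ℕ) : ℝ) ≤ (ℓ : ℝ) ^ n * (ε * Fintype.card B) := by
      push_cast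
      calc ∑ φ ∈ P, ((Badφ φ).card : ℝ) ≤ ∑ _φ ∈ P, (ε * Fintype.card B) :=
            Finset.sum_le_sum (fun φ _ => hbadφ φ)
        _ = P.card * (ε * Fintype.card B) := by rw [Finset.sum_const, nsmul_eq_mul]
        _ = (ℓ : ℝ) ^ n * (ε * Fintype.card B) := by rw [hPcard]; push_cast; ring
    push_cast at h2
    linarith
  have hℓpos : (0 : ℝ) < (ℓ : ℝ) ^ (n - 2) := by positivity
  have hpow : (ℓ : ℝ) ^ n = (ℓ : ℝ) ^ (n - 2) * (ℓ : ℝ) ^ 2 := by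
    rw [← pow_add]
    congr 1
    omega
  rw [hpow] at hreal
  nlinarith [hreal, hℓpos, mul_pos hε0 (by positivity : (0:ℝ) < (ℓ:ℝ)^2)]
end
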